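/- arXiv:2207.05169 — 6 statements merged into one kernel-verified Lean document; each statement's English description precedes it below -/
import Mathlib

section
/- Let T > 0 and K ∈ L²([0,T];ℝ). Then there exists a constant C (depending only on T and K) such that: for every c₀ ≥ 0 and every bounded measurable function f : [0,T] → [0,∞) satisfying f(t) ≤ c₀ + ∫₀^t K(t−s)² f(s) ds for all t ∈ [0,T], one has f(t) ≤ C·c₀ for all t ∈ [0,T]. -/
open MeasureTheory Set

/-- Gronwall-type a-priori bound for Volterra inequalities with an `L¹`
convolution kernel `K²`, where `K ∈ L²([0,T];ℝ)`. -/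
theorem volterra_gronwall_bound
    (T : ℝ) (hT : 0 < T) (K : ℝ → ℝ)
    (hK : MemLp K 2 (volume.restrict (Set.Icc 0 T))) :
    ∃ C : ℝ, ∀ c₀ : ℝ, 0 ≤ c₀ → ∀ f : ℝ → ℝ, Measurable f →
      (∀ t ∈ Set.Icc (0:ℝ) T, 0 ≤ f t) →
      (∃ M : ℝ, ∀ t ∈ Set.Icc (0:ℝ) T, f t ≤ M) →
      (∀ t ∈ Set.Icc (0:ℝ) T, f t ≤ c₀ + ∫ s in Set.Ioc (0:ℝ) t, (K (t - s))^2 * f s) →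
      ∀ t ∈ Set.Icc (0:ℝ) T, f t ≤ C * c₀ := by
  classical
  -- measurable representative K' of K on [0,T]
  set K' : ℝ → ℝ := hK.1.mk K with hK'def
  have hK'meas : StronglyMeasurable K' := hK.1.stronglyMeasurable_mk
  have hK'ae : K =ᵐ[volume.restrict (Icc 0 T)] K' := hK.1.ae_eq_mk
  set g : ℝ → ℝ := fun u => K' u ^ 2 with hgdef
  have hgmeas : Measurable g := hK'meas.measurable.pow_const 2
  have hgnn : ∀ u, 0 ≤ g u := fun u => sq_nonneg _
  have hgint : IntegrableOn g (Icc 0 T) volume := by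
    have h1 := hK.integrable_sq
    exact h1.congr (hK'ae.mono fun x hx => by simp only [g]; rw [hx])
  have hgII : IntervalIntegrable g volume 0 T := by
    rw [intervalIntegrable_iff_integrableOn_Icc_of_le hT.le]; exact hgint
  -- choose δ ∈ (0, T] with ∫_{(0,δ]} g ≤ 1/2
  obtain ⟨δ, hδmem, hδhalf⟩ :
      ∃ δ ∈ Ioc (0:ℝ) T, (∫ u in Ioc (0:ℝ) δ, g u) ≤ 1/2 := by
    have hcont : ContinuousOn (fun x => ∫ u in Ioc (0:ℝ) x, g u) (Icc 0 T) :=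
      intervalIntegral.continuousOn_primitive hgint
    have h0 : (0:ℝ) ∈ Icc (0:ℝ) T := ⟨le_rfl, hT.le⟩
    have hcw : ContinuousWithinAt (fun x => ∫ u in Ioc (0:ℝ) x, g u) (Ioc 0 T) 0 :=
      (hcont 0 h0).mono Ioc_subset_Icc_self
    have h00 : (∫ u in Ioc (0:ℝ) (0:ℝ), g u) = 0 := by simp
    have hne : (nhdsWithin (0:ℝ) (Ioc 0 T)).NeBot := by
      rw [← mem_closure_iff_nhdsWithin_neBot, closure_Ioc hT.ne, left_mem_Icc]
      exact hT.le
    have hev : ∀ᶠ x in nhdsWithin (0:ℝ) (Ioc 0 T),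
        (∫ u in Ioc (0:ℝ) x, g u) < 1/2 := by
      have := hcw
      rw [ContinuousWithinAt, h00] at this
      exact this.eventually_lt_const (by norm_num)
    obtain ⟨δ, hδ1, hδ2⟩ := (hev.and self_mem_nhdsWithin).exists
    exact ⟨δ, hδ2, hδ1.le⟩
  obtain ⟨hδ0, hδT⟩ := hδmem
  set A : ℝ := ∫ u in Ioc (0:ℝ) T, g u with hAdef
  have hA0 : 0 ≤ A := setIntegral_nonneg measurableSet_Ioc fun u _ => hgnn u
  have hgintIoc : IntegrableOn g (Ioc 0 T) volume := hgint.mono_set Ioc_subset_Icc_self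
  have hgintδ : IntegrableOn g (Ioc 0 δ) volume :=
    hgintIoc.mono_set (Ioc_subset_Ioc le_rfl hδT)
  -- substitution lemma
  have subst : ∀ (t a b : ℝ), a ≤ b →
      (∫ s in Ioc a b, g (t - s)) = ∫ u in Ioc (t - b) (t - a), g u := by
    intro t a b hab
    rw [← intervalIntegral.integral_of_le hab,
      ← intervalIntegral.integral_of_le (by linarith : t - b ≤ t - a),
      intervalIntegral.integral_comp_sub_left]
  -- integrability of the shifted kernel
  have hgcomp : ∀ t ∈ Icc (0:ℝ) T, ∀ a b : ℝ, 0 ≤ a → b ≤ t →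
      IntegrableOn (fun s => g (t - s)) (Ioc a b) volume := by
    intro t ht a b ha hb
    rcases le_or_gt b a with h | h
    · rw [Ioc_eq_empty (not_lt.mpr h)]; simp
    have h2 := hgII.comp_sub_left t
    have h3 : IntervalIntegrable (fun x => g (t - x)) volume a b := by
      apply h2.mono_set
      rw [uIcc_of_le h.le, uIcc_of_ge (by linarith [ht.2] : t - T ≤ t - 0)]
      exact Icc_subset_Icc (by linarith [ht.2]) (by linarith)
    rw [intervalIntegrable_iff_integrableOn_Ioc_of_le h.le] at h3
    exact h3
  -- choose N with T ≤ N δ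
  obtain ⟨N, hN⟩ := exists_nat_ge (T / δ)
  have hNδ : T ≤ (N : ℝ) * δ := by
    rw [div_le_iff₀ hδ0] at hN; linarith
  refine ⟨(2 * A + 2) ^ N, ?_⟩
  intro c₀ hc₀ f hfmeas hfnn hfbdd hf
  obtain ⟨M, hM⟩ := hfbdd
  set M' : ℝ := max M 0 with hM'def
  have hM'0 : 0 ≤ M' := le_max_right _ _
  have hfM' : ∀ t ∈ Icc (0:ℝ) T, f t ≤ M' := fun t ht => (hM t ht).trans (le_max_left _ _)
  -- integrability of products
  have hprod_int : ∀ t ∈ Icc (0:ℝ) T, ∀ a b : ℝ, 0 ≤ a → b ≤ t →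
      IntegrableOn (fun s => g (t - s) * f s) (Ioc a b) volume := by
    intro t ht a b ha hb
    have hdom : IntegrableOn (fun s => g (t - s) * M') (Ioc a b) volume :=
      (hgcomp t ht a b ha hb).mul_const M'
    refine Integrable.mono hdom ?_ ?_
    · exact ((hgmeas.comp (measurable_const.sub measurable_id)).mul hfmeas).aestronglyMeasurable
    · refine (ae_restrict_iff' measurableSet_Ioc).2 (Filter.Eventually.of_forall fun s hs => ?_)
      have hsI : s ∈ Icc (0:ℝ) T := ⟨ha.trans hs.1.le, hs.2.trans (hb.trans ht.2)⟩
      have h1 : 0 ≤ f s := hfnn s hsI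
      have h2 : f s ≤ M' := hfM' s hsI
      have h3 : 0 ≤ g (t - s) := hgnn _
      rw [Real.norm_eq_abs, Real.norm_eq_abs, abs_of_nonneg (mul_nonneg h3 h1),
        abs_of_nonneg (mul_nonneg h3 hM'0)]
      exact mul_le_mul_of_nonneg_left h2 h3
  -- replace K by K' in the hypothesis
  have hcongr : ∀ t ∈ Icc (0:ℝ) T,
      (∫ s in Ioc (0:ℝ) t, (K (t - s))^2 * f s) = ∫ s in Ioc (0:ℝ) t, g (t - s) * f s := by
    intro t ht
    refine setIntegral_congr_ae measurableSet_Ioc ?_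
    have h0 : ∀ᵐ u : ℝ, u ∈ Icc (0:ℝ) T → K u = K' u := ae_imp_of_ae_restrict hK'ae
    have hNn : volume {u : ℝ | ¬(u ∈ Icc (0:ℝ) T → K u = K' u)} = 0 := h0
    have hpre := (Measure.measurePreserving_sub_left (volume : Measure ℝ)
      t).quasiMeasurePreserving.preimage_null hNn
    rw [ae_iff]
    refine measure_mono_null ?_ hpre
    intro s hs
    simp only [mem_setOf_eq, mem_preimage] at hs ⊢
    intro habs
    refine hs fun hsIoc => ?_
    have hmem : t - s ∈ Icc (0:ℝ) T := ⟨by linarith [hsIoc.2], by linarith [hsIoc.1, ht.2]⟩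
    rw [habs hmem]
  -- bound for pieces of the integral
  have hbound : ∀ t ∈ Icc (0:ℝ) T, ∀ a b S' : ℝ, 0 ≤ a → a ≤ b → b ≤ t → 0 ≤ S' →
      (∀ s ∈ Ioc a b, f s ≤ S') →
      (∫ s in Ioc a b, g (t - s) * f s) ≤ S' * ∫ u in Ioc (t - b) (t - a), g u := by
    intro t ht a b S' ha hab hb hS' hfS'
    have h1 : (∫ s in Ioc a b, g (t - s) * f s) ≤ ∫ s in Ioc a b, g (t - s) * S' := by
      refine setIntegral_mono_on (hprod_int t ht a b ha hb)
        ((hgcomp t ht a b ha hb).mul_const S') measurableSet_Ioc fun s hs => ?_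
      exact mul_le_mul_of_nonneg_left (hfS' s hs) (hgnn _)
    calc (∫ s in Ioc a b, g (t - s) * f s) ≤ ∫ s in Ioc a b, g (t - s) * S' := h1
      _ = (∫ s in Ioc a b, g (t - s)) * S' := by rw [integral_mul_const]
      _ = (∫ u in Ioc (t - b) (t - a), g u) * S' := by rw [subst t a b hab]
      _ = S' * ∫ u in Ioc (t - b) (t - a), g u := mul_comm _ _
  -- sup sequence
  set S : ℕ → ℝ := fun n => sSup (f '' Icc 0 (min ((n : ℝ) * δ) T)) with hSdef
  have hJsub : ∀ n : ℕ, Icc (0:ℝ) (min ((n : ℝ) * δ) T) ⊆ Icc 0 T :=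
    fun n => Icc_subset_Icc le_rfl (min_le_right _ _)
  have hJne : ∀ n : ℕ, (Icc (0:ℝ) (min ((n : ℝ) * δ) T)).Nonempty := by
    intro n
    refine ⟨0, le_rfl, le_min (by positivity) hT.le⟩
  have hbddA : ∀ n : ℕ, BddAbove (f '' Icc 0 (min ((n : ℝ) * δ) T)) := by
    intro n
    refine ⟨M', ?_⟩
    rintro y ⟨x, hx, rfl⟩
    exact hfM' x (hJsub n hx)
  have hleS : ∀ n : ℕ, ∀ t ∈ Icc (0:ℝ) (min ((n : ℝ) * δ) T), f t ≤ S n :=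
    fun n t ht => le_csSup (hbddA n) (mem_image_of_mem f ht)
  have hS0 : ∀ n : ℕ, 0 ≤ S n := by
    intro n
    obtain ⟨x, hx⟩ := hJne n
    exact (hfnn x (hJsub n hx)).trans (hleS n x hx)
  -- base case
  have hbase : S 0 ≤ c₀ := by
    have h00 : min ((0:ℕ) * δ : ℝ) T = 0 := by
      norm_num
      exact hT.le
    refine csSup_le ((hJne 0).image f) ?_
    rintro y ⟨x, hx, rfl⟩
    rw [h00] at hx
    have hx0 : x = 0 := le_antisymm hx.2 hx.1
    subst hx0
    have := hf 0 ⟨le_rfl, hT.le⟩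
    simpa using this
  -- recurrence
  have hrec : ∀ n : ℕ, S (n + 1) ≤ 2 * c₀ + 2 * A * S n := by
    intro n
    have hkey : S (n + 1) ≤ c₀ + A * S n + (1/2) * S (n + 1) := by
      refine csSup_le ((hJne (n+1)).image f) ?_
      rintro y ⟨t, ht, rfl⟩
      have htT : t ∈ Icc (0:ℝ) T := hJsub (n+1) ht
      have htn : t ≤ ((n : ℝ) + 1) * δ := by
        have := ht.2
        rw [le_min_iff] at this
        push_cast at this
        linarith [this.1]
      set a : ℝ := max (t - δ) 0 with hadef
      have ha0 : 0 ≤ a := le_max_right _ _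
      have hat : a ≤ t := max_le (by linarith) htT.1
      have hta : t - a ≤ δ := by
        have : t - δ ≤ a := le_max_left _ _
        linarith
      have haS : ∀ s ∈ Ioc (0:ℝ) a, f s ≤ S n := by
        intro s hs
        refine hleS n s ⟨hs.1.le, le_min ?_ ?_⟩
        · have h1 : a ≤ (n : ℝ) * δ := by
            rcases le_or_gt (t - δ) 0 with h | h
            · rw [hadef, max_eq_right h]; positivity
            · rw [hadef, max_eq_left h.le]; linarith
          linarith [hs.2]
        · linarith [hs.2, hat, htT.2]
      have haS' : ∀ s ∈ Ioc a t, f s ≤ S (n + 1) := by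
        intro s hs
        refine hleS (n+1) s ⟨ha0.trans hs.1.le, le_trans hs.2 ht.2⟩
      -- split the integral
      have hsplit : (∫ s in Ioc (0:ℝ) t, g (t - s) * f s)
          = (∫ s in Ioc (0:ℝ) a, g (t - s) * f s) + ∫ s in Ioc a t, g (t - s) * f s := by
        rw [← intervalIntegral.integral_of_le htT.1, ← intervalIntegral.integral_of_le ha0,
          ← intervalIntegral.integral_of_le hat]
        rw [← intervalIntegral.integral_add_adjacent_intervals
          (b := a) ?_ ?_]
        · rw [intervalIntegrable_iff_integrableOn_Ioc_of_le ha0]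
          exact hprod_int t htT 0 a le_rfl hat
        · rw [intervalIntegrable_iff_integrableOn_Ioc_of_le hat]
          exact hprod_int t htT a t ha0 le_rfl
      -- first piece
      have hp1 : (∫ s in Ioc (0:ℝ) a, g (t - s) * f s) ≤ A * S n := by
        calc (∫ s in Ioc (0:ℝ) a, g (t - s) * f s)
            ≤ S n * ∫ u in Ioc (t - a) (t - 0), g u :=
              hbound t htT 0 a (S n) le_rfl ha0 hat (hS0 n) haS
          _ ≤ S n * A := by
              refine mul_le_mul_of_nonneg_left ?_ (hS0 n)
              refine setIntegral_mono_set hgintIoc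
                ((ae_restrict_iff' measurableSet_Ioc).2
                  (Filter.Eventually.of_forall fun u _ => hgnn u)) ?_
              refine Filter.Eventually.of_forall ?_
              intro u hu
              exact ⟨by linarith [hu.1, hat], by linarith [hu.2, htT.2]⟩
          _ = A * S n := mul_comm _ _
      -- second piece
      have hp2 : (∫ s in Ioc a t, g (t - s) * f s) ≤ (1/2) * S (n + 1) := by
        calc (∫ s in Ioc a t, g (t - s) * f s)
            ≤ S (n+1) * ∫ u in Ioc (t - t) (t - a), g u :=
              hbound t htT a t (S (n+1)) ha0 hat le_rfl (hS0 (n+1)) haS'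
          _ ≤ S (n+1) * (1/2) := by
              refine mul_le_mul_of_nonneg_left ?_ (hS0 (n+1))
              refine le_trans ?_ hδhalf
              refine setIntegral_mono_set hgintδ
                ((ae_restrict_iff' measurableSet_Ioc).2
                  (Filter.Eventually.of_forall fun u _ => hgnn u)) ?_
              refine Filter.Eventually.of_forall ?_
              intro u hu
              exact ⟨by linarith [hu.1], by linarith [hu.2, hta]⟩
          _ = (1/2) * S (n+1) := mul_comm _ _
      calc f t ≤ c₀ + ∫ s in Ioc (0:ℝ) t, (K (t - s))^2 * f s := hf t htT
        _ = c₀ + ∫ s in Ioc (0:ℝ) t, g (t - s) * f s := by rw [hcongr t htT]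
        _ = c₀ + ((∫ s in Ioc (0:ℝ) a, g (t - s) * f s)
            + ∫ s in Ioc a t, g (t - s) * f s) := by rw [hsplit]
        _ ≤ c₀ + (A * S n + (1/2) * S (n+1)) := by linarith [hp1, hp2]
        _ = c₀ + A * S n + (1/2) * S (n+1) := by ring
    linarith [hkey]
  -- growth bound
  have hSn : ∀ n : ℕ, S n ≤ (2 * A + 2) ^ n * c₀ := by
    intro n
    induction n with
    | zero => simpa using hbase
    | succ n ih =>
      have h1 : (1:ℝ) ≤ (2 * A + 2) ^ n := one_le_pow₀ (by linarith)
      have := hrec n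
      have h2 : 2 * A * S n ≤ 2 * A * ((2 * A + 2) ^ n * c₀) :=
        mul_le_mul_of_nonneg_left ih (by linarith)
      calc S (n+1) ≤ 2 * c₀ + 2 * A * S n := hrec n
        _ ≤ 2 * c₀ + 2 * A * ((2 * A + 2) ^ n * c₀) := by linarith
        _ ≤ (2 * A + 2) ^ (n+1) * c₀ := by
            rw [pow_succ]
            nlinarith [mul_nonneg (mul_nonneg hA0 (by linarith : (0:ℝ) ≤ (2*A+2)^n)) hc₀]
  -- conclusion
  intro t ht
  have hmin : min ((N : ℝ) * δ) T = T := min_eq_right hNδ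
  have htJ : t ∈ Icc (0:ℝ) (min ((N : ℝ) * δ) T) := by rw [hmin]; exact ht
  exact (hleS N t htJ).trans (hSn N)
end

section
/- Let T > 0, let U be a separable metrizable Suslin space, let E be a finite-dimensional normed real vector space, and let f : [0,T] × ℝ^d × U → E be Borel-measurable, continuous in u ∈ U for each fixed (t,x), and continuous in x ∈ ℝ^d uniformly with respect to u ∈ U for each fixed t. Assume the growth condition |f(t,x,u)| ≤ c·|x|^δ + ϑ(t,u) for all (t,x,u), where c > 0, δ ≥ 1, and ϑ ∈ IC(0,T;U). Fix β ≥ 1 and let 𝒴^β(0,T;U) denote the set of Young measures μ on U over [0,T] with ∫_{U×[0,T]} ϑ(t,u)^β μ(du,dt) < ∞, equipped with the σ-algebra generated by the evaluation maps μ ↦ μ(J), J a Borel subset of U × [0,T]. Then for each t ∈ [0,T], the map Σ_t : C([0,T];ℝ^d) × 𝒴^β(0,T;U) → E defined by Σ_t(x,μ) = ∫_{U×[0,t]} f(s, x(s), u) μ(du,ds) is measurable with respect to the product of the Borel σ-algebra of C([0,T];ℝ^d) (supremum norm) and the evaluation σ-algebra on 𝒴^β(0,T;U). -/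
open MeasureTheory Set Filter Topology ENNReal NNReal

/-- A Young measure on `U` over `[0,T]`. -/
def IsYoungMeasure {U : Type*} [MeasurableSpace U] (T : ℝ) (μ : Measure (U × ℝ)) : Prop :=
  ∀ D : Set ℝ, MeasurableSet D → μ (Set.univ ×ˢ D) = volume (D ∩ Set.Icc 0 T)

/-- Stable convergence of Young measures on `U` over `[0,T]`. -/
def StablyTendsTo {U : Type*} [TopologicalSpace U] [MeasurableSpace U] (T : ℝ)
    (μs : ℕ → Measure (U × ℝ)) (μ : Measure (U × ℝ)) : Prop :=
  ∀ D : Set ℝ, MeasurableSet D → D ⊆ Set.Icc 0 T →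
    ∀ f : BoundedContinuousFunction U ℝ,
      Filter.Tendsto (fun n => ∫ p in Set.univ ×ˢ D, f p.1 ∂(μs n)) Filter.atTop
        (nhds (∫ p in Set.univ ×ˢ D, f p.1 ∂μ))

/-- `U` is a Suslin space: a continuous surjective image of a Polish space. -/
def IsSuslin (U : Type*) [TopologicalSpace U] : Prop :=
  ∃ (S : Type) (ts : TopologicalSpace S), @PolishSpace S ts ∧
    ∃ φ : S → U, @Continuous S U ts _ φ ∧ Function.Surjective φ

/-- The set of Young measures on `U` over `[0,T]` with `∫ ϑ^β dμ < ∞`. -/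
def YoungLp (U : Type*) [TopologicalSpace U] [MeasurableSpace U] (T : ℝ)
    (ϑ : ℝ → U → ℝ≥0∞) (β : ℝ) : Type _ :=
  {μ : Measure (U × ℝ) //
    IsYoungMeasure T μ ∧ (∫⁻ p in Set.univ ×ˢ Set.Icc (0:ℝ) T, ϑ p.2 p.1 ^ β ∂μ) ≠ ⊤}

/-- The σ-algebra on `YoungLp` generated by the evaluation maps `μ ↦ μ(J)`,
`J ⊆ U × [0,T]` Borel. -/
def evaluationSigmaAlgebra (U : Type*) [TopologicalSpace U] [MeasurableSpace U] (T : ℝ)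
    (ϑ : ℝ → U → ℝ≥0∞) (β : ℝ) : MeasurableSpace (YoungLp U T ϑ β) :=
  ⨆ (J : Set (U × ℝ)) (_ : MeasurableSet J),
    MeasurableSpace.comap (fun μ : YoungLp U T ϑ β => μ.1 J) inferInstance

section Aux

variable {U : Type*} [TopologicalSpace U] [MeasurableSpace U]
  {T : ℝ} {ϑ : ℝ → U → ℝ≥0∞} {β : ℝ}

lemma youngLp_eval_measurable (J : Set (U × ℝ)) (hJ : MeasurableSet J) :
    @Measurable (YoungLp U T ϑ β) ℝ≥0∞ (evaluationSigmaAlgebra U T ϑ β) _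
      (fun μ => μ.1 J) := by
  rw [measurable_iff_comap_le]
  exact le_iSup₂ (f := fun (J : Set (U × ℝ)) (_ : MeasurableSet J) =>
    MeasurableSpace.comap (fun μ : YoungLp U T ϑ β => μ.1 J) inferInstance) J hJ

lemma youngLp_isFiniteMeasure (μ : YoungLp U T ϑ β) : IsFiniteMeasure μ.1 := by
  constructor
  have h := μ.2.1 Set.univ MeasurableSet.univ
  rw [Set.univ_prod_univ, Set.univ_inter] at h
  rw [h]
  exact measure_Icc_lt_top

lemma youngLp_integral_measurable {E : Type*} [NormedAddCommGroup E] [NormedSpace ℝ E]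
    [MeasurableSpace E] [BorelSpace E] [SecondCountableTopology E] [CompleteSpace E]
    {S : Set (U × ℝ)} (hS : MeasurableSet S)
    {g : U × ℝ → E} (hg : Measurable g)
    (hint : ∀ μ : YoungLp U T ϑ β, HasFiniteIntegral g (μ.1.restrict S)) :
    @Measurable (YoungLp U T ϑ β) E (evaluationSigmaAlgebra U T ϑ β) _
      (fun μ => ∫ q in S, g q ∂μ.1) := by
  letI m : MeasurableSpace (YoungLp U T ϑ β) := evaluationSigmaAlgebra U T ϑ β
  set F : ℕ → SimpleFunc (U × ℝ) E :=
    fun n => SimpleFunc.approxOn g hg Set.univ 0 (Set.mem_univ 0) n with hF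
  have key : ∀ μ : YoungLp U T ϑ β,
      Tendsto (fun n => ∫ q in S, F n q ∂μ.1) atTop (𝓝 (∫ q in S, g q ∂μ.1)) := by
    intro μ
    haveI := youngLp_isFiniteMeasure μ
    have hgi : Integrable g (μ.1.restrict S) := ⟨hg.aestronglyMeasurable, hint μ⟩
    refine tendsto_integral_of_dominated_convergence (fun q => ‖g q‖ + ‖g q‖)
      (fun n => (F n).stronglyMeasurable.aestronglyMeasurable)
      (hgi.norm.add hgi.norm)
      (fun n => ae_of_all _ fun q => SimpleFunc.norm_approxOn_zero_le hg (Set.mem_univ 0) q n)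
      (ae_of_all _ fun q =>
        SimpleFunc.tendsto_approxOn hg (Set.mem_univ 0) (by simp))
  refine measurable_of_tendsto_metrizable
    (f := fun n (μ : YoungLp U T ϑ β) => ∫ q in S, F n q ∂μ.1) (fun n => ?_)
    (tendsto_pi_nhds.2 key)
  show Measurable fun μ : YoungLp U T ϑ β => ∫ q in S, F n q ∂μ.1
  have heq : (fun μ : YoungLp U T ϑ β => ∫ q in S, F n q ∂μ.1)
      = fun μ => ∑ x ∈ (F n).range, (μ.1 ((F n) ⁻¹' {x} ∩ S)).toReal • x := by
    funext μ
    haveI := youngLp_isFiniteMeasure μ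
    rw [SimpleFunc.integral_eq_sum _ (SimpleFunc.integrable_of_isFiniteMeasure _)]
    refine Finset.sum_congr rfl fun x _ => ?_
    rw [Measure.real, Measure.restrict_apply (SimpleFunc.measurableSet_fiber _ _)]
  rw [heq]
  refine Finset.measurable_sum _ fun x _ => ?_
  exact ((youngLp_eval_measurable _
    ((SimpleFunc.measurableSet_fiber _ _).inter hS)).ennreal_toReal).smul_const x

end Aux

/-- Measurability of the map
`(x, μ) ↦ Σ_t(x,μ) = ∫_{U×[0,t]} f(s, x(s), u) μ(du,ds)` on
`C([0,T];ℝᵈ) × 𝒴^β(0,T;U)`, where `C([0,T];ℝᵈ)` carries its Borel σ-algebra and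
`𝒴^β(0,T;U)` the σ-algebra generated by the evaluation maps. -/
theorem sigma_t_measurable
    (d : ℕ) (T : ℝ) (hT : 0 < T)
    (U : Type*) [TopologicalSpace U] [TopologicalSpace.MetrizableSpace U]
    [TopologicalSpace.SeparableSpace U]
    [MeasurableSpace U] [BorelSpace U] (hU : IsSuslin U)
    (E : Type*) [NormedAddCommGroup E] [NormedSpace ℝ E] [FiniteDimensional ℝ E]
    [MeasurableSpace E] [BorelSpace E]
    (f : ℝ → EuclideanSpace ℝ (Fin d) → U → E)
    (hfmeas : Measurable fun p : ℝ × EuclideanSpace ℝ (Fin d) × U => f p.1 p.2.1 p.2.2)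
    (hfu : ∀ (t : ℝ) (x : EuclideanSpace ℝ (Fin d)), Continuous (f t x))
    (hfx : ∀ (t : ℝ) (x₀ : EuclideanSpace ℝ (Fin d)), ∀ ε > (0:ℝ), ∃ δ' > (0:ℝ),
      ∀ x : EuclideanSpace ℝ (Fin d), ‖x - x₀‖ < δ' → ∀ u : U, ‖f t x u - f t x₀ u‖ < ε)
    (c δ : ℝ) (hc : 0 < c) (hδ : 1 ≤ δ)
    (ϑ : ℝ → U → ℝ≥0∞) (hϑmeas : Measurable fun p : U × ℝ => ϑ p.2 p.1)
    (hϑinf : ∀ t : ℝ, ∀ R : NNReal, IsCompact {u : U | ϑ t u ≤ R})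
    (hgrowth : ∀ (t : ℝ) (x : EuclideanSpace ℝ (Fin d)) (u : U),
      (‖f t x u‖₊ : ℝ≥0∞) ≤ ENNReal.ofReal (c * ‖x‖ ^ δ) + ϑ t u)
    (β : ℝ) (hβ : 1 ≤ β)
    (t : ℝ) (ht : t ∈ Set.Icc (0:ℝ) T) :
    @Measurable (C(Set.Icc (0:ℝ) T, EuclideanSpace ℝ (Fin d)) × YoungLp U T ϑ β) E
      (@Prod.instMeasurableSpace _ _
        (borel C(Set.Icc (0:ℝ) T, EuclideanSpace ℝ (Fin d)))
        (evaluationSigmaAlgebra U T ϑ β))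
      _
      (fun p =>
        ∫ q in Set.univ ×ˢ Set.Icc (0:ℝ) t,
          f q.2 (p.1 (Set.projIcc 0 T hT.le q.2)) q.1 ∂(p.2.1)) := by
  letI mC : MeasurableSpace C(Set.Icc (0:ℝ) T, EuclideanSpace ℝ (Fin d)) :=
    borel C(Set.Icc (0:ℝ) T, EuclideanSpace ℝ (Fin d))
  haveI : BorelSpace C(Set.Icc (0:ℝ) T, EuclideanSpace ℝ (Fin d)) := ⟨rfl⟩
  haveI : SecondCountableTopology E := inferInstance
  haveI : CompleteSpace E := FiniteDimensional.complete ℝ E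
  set S : Set (U × ℝ) := Set.univ ×ˢ Set.Icc (0:ℝ) t with hSdef
  have hS : MeasurableSet S := MeasurableSet.univ.prod measurableSet_Icc
  -- measurability in (u,s) for fixed x
  have hgmeas : ∀ x : C(Set.Icc (0:ℝ) T, EuclideanSpace ℝ (Fin d)),
      Measurable fun q : U × ℝ => f q.2 (x (Set.projIcc 0 T hT.le q.2)) q.1 := by
    intro x
    have h1 : Measurable fun q : U × ℝ =>
        (q.2, (x (Set.projIcc 0 T hT.le q.2), q.1)) :=
      measurable_snd.prodMk
        (((x.continuous.comp continuous_projIcc).measurable.comp measurable_snd).prodMk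
          measurable_fst)
    exact hfmeas.comp h1
  -- finiteness of ∫ ϑ dμ on S
  have hϑint : ∀ μ : YoungLp U T ϑ β, ∫⁻ q in S, ϑ q.2 q.1 ∂μ.1 ≠ ⊤ := by
    intro μ
    haveI := youngLp_isFiniteMeasure μ
    have hpt : ∀ q : U × ℝ, ϑ q.2 q.1 ≤ 1 + ϑ q.2 q.1 ^ β := by
      intro q
      rcases le_total (ϑ q.2 q.1) 1 with h | h
      · exact h.trans (le_add_right le_rfl)
      · calc ϑ q.2 q.1 = ϑ q.2 q.1 ^ (1:ℝ) := (ENNReal.rpow_one _).symm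
          _ ≤ ϑ q.2 q.1 ^ β := ENNReal.rpow_le_rpow_of_exponent_le h hβ
          _ ≤ 1 + ϑ q.2 q.1 ^ β := le_add_self
    have h1 : ∫⁻ q in S, ϑ q.2 q.1 ∂μ.1 ≤ ∫⁻ q in S, (1 + ϑ q.2 q.1 ^ β) ∂μ.1 :=
      lintegral_mono fun q => hpt q
    refine ne_of_lt (lt_of_le_of_lt h1 ?_)
    rw [lintegral_add_left measurable_const]
    refine ENNReal.add_lt_top.2 ⟨?_, ?_⟩
    · rw [lintegral_one, Measure.restrict_apply_univ]; exact measure_lt_top _ _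
    · exact lt_of_le_of_lt
        (lintegral_mono_set (Set.prod_mono subset_rfl (Set.Icc_subset_Icc le_rfl ht.2)))
        (lt_top_iff_ne_top.2 μ.2.2)
  -- real-valued growth bound
  have hnorm : ∀ (s : ℝ) (y : EuclideanSpace ℝ (Fin d)) (u : U), ϑ s u ≠ ⊤ →
      ‖f s y u‖ ≤ c * ‖y‖ ^ δ + (ϑ s u).toReal := by
    intro s y u hϑu
    have h2 := ENNReal.toReal_mono
      (by simp [ENNReal.add_ne_top, hϑu]) (hgrowth s y u)
    rwa [ENNReal.coe_toReal, coe_nnnorm,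
      ENNReal.toReal_add ENNReal.ofReal_ne_top hϑu,
      ENNReal.toReal_ofReal (by positivity)] at h2
  -- finite integral for fixed x
  have hfi : ∀ (x : C(Set.Icc (0:ℝ) T, EuclideanSpace ℝ (Fin d))) (μ : YoungLp U T ϑ β),
      HasFiniteIntegral (fun q : U × ℝ => f q.2 (x (Set.projIcc 0 T hT.le q.2)) q.1)
        (μ.1.restrict S) := by
    intro x μ
    haveI := youngLp_isFiniteMeasure μ
    have hb : ∀ q : U × ℝ, (‖f q.2 (x (Set.projIcc 0 T hT.le q.2)) q.1‖₊ : ℝ≥0∞)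
        ≤ ENNReal.ofReal (c * ‖x‖ ^ δ) + ϑ q.2 q.1 := by
      intro q
      refine (hgrowth _ _ _).trans (add_le_add (ENNReal.ofReal_le_ofReal ?_) le_rfl)
      exact mul_le_mul_of_nonneg_left
        (Real.rpow_le_rpow (norm_nonneg _) (x.norm_coe_le_norm _) (by linarith)) hc.le
    refine lt_of_le_of_lt (lintegral_mono fun q => hb q) ?_
    rw [lintegral_add_left measurable_const]
    refine ENNReal.add_lt_top.2 ⟨?_, lt_top_iff_ne_top.2 (hϑint μ)⟩
    rw [lintegral_const]
    exact ENNReal.mul_lt_top ENNReal.ofReal_lt_top (measure_lt_top _ _)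
  -- measurability in μ for fixed x
  have hmeasμ : ∀ x : C(Set.Icc (0:ℝ) T, EuclideanSpace ℝ (Fin d)),
      @Measurable (YoungLp U T ϑ β) E (evaluationSigmaAlgebra U T ϑ β) _
        (fun μ => ∫ q in S, f q.2 (x (Set.projIcc 0 T hT.le q.2)) q.1 ∂μ.1) :=
    fun x => youngLp_integral_measurable hS (hgmeas x) (fun μ => hfi x μ)
  -- continuity in x for fixed μ
  have hcont : ∀ μ : YoungLp U T ϑ β,
      Continuous fun x : C(Set.Icc (0:ℝ) T, EuclideanSpace ℝ (Fin d)) =>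
        ∫ q in S, f q.2 (x (Set.projIcc 0 T hT.le q.2)) q.1 ∂μ.1 := by
    intro μ
    haveI := youngLp_isFiniteMeasure μ
    rw [continuous_iff_seqContinuous]
    intro xs x hxs
    have hae : ∀ᵐ q ∂(μ.1.restrict S), ϑ q.2 q.1 ≠ ⊤ :=
      (ae_lt_top hϑmeas (hϑint μ)).mono fun q hq => hq.ne
    have hconv : Tendsto
        (fun n => ∫ q in S, f q.2 ((xs n) (Set.projIcc 0 T hT.le q.2)) q.1 ∂μ.1) atTop
        (𝓝 (∫ q in S, f q.2 (x (Set.projIcc 0 T hT.le q.2)) q.1 ∂μ.1)) := by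
      refine tendsto_integral_filter_of_dominated_convergence
        (fun q => c * (‖x‖ + 1) ^ δ + (ϑ q.2 q.1).toReal)
        (Filter.Eventually.of_forall fun n => (hgmeas (xs n)).aestronglyMeasurable)
        ?_ ?_ ?_
      · have hev : ∀ᶠ n in atTop, ‖xs n‖ < ‖x‖ + 1 :=
          (hxs.norm).eventually_lt_const (lt_add_one _)
        filter_upwards [hev] with n hn
        filter_upwards [hae] with q hq
        refine (hnorm _ _ _ hq).trans (add_le_add ?_ le_rfl)
        have hle : ‖(xs n) (Set.projIcc 0 T hT.le q.2)‖ ≤ ‖x‖ + 1 :=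
          ((xs n).norm_coe_le_norm _).trans hn.le
        exact mul_le_mul_of_nonneg_left
          (Real.rpow_le_rpow (norm_nonneg _) hle (by linarith)) hc.le
      · exact (integrable_const _).add
          (integrable_toReal_of_lintegral_ne_top hϑmeas.aemeasurable (hϑint μ))
      · refine ae_of_all _ fun q => ?_
        rw [Metric.tendsto_atTop]
        intro ε hε
        obtain ⟨δ', hδ', hδ'f⟩ := hfx q.2 (x (Set.projIcc 0 T hT.le q.2)) ε hε
        obtain ⟨N, hN⟩ := Metric.tendsto_atTop.1 hxs δ' hδ'
        refine ⟨N, fun n hn => ?_⟩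
        rw [dist_eq_norm]
        refine hδ'f _ ?_ q.1
        calc ‖(xs n) (Set.projIcc 0 T hT.le q.2) - x (Set.projIcc 0 T hT.le q.2)‖
            ≤ ‖xs n - x‖ := by
              simpa using ContinuousMap.norm_coe_le_norm (xs n - x) (Set.projIcc 0 T hT.le q.2)
          _ = dist (xs n) x := (dist_eq_norm _ _).symm
          _ < δ' := hN n hn
    exact hconv
  exact measurable_uncurry_of_continuous_of_measurable
    (u := fun (x : C(Set.Icc (0:ℝ) T, EuclideanSpace ℝ (Fin d))) (μ : YoungLp U T ϑ β) =>
      ∫ q in S, f q.2 (x (Set.projIcc 0 T hT.le q.2)) q.1 ∂μ.1) hcont hmeasμ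
end

section
/- Let T > 0, let U be a topological space, let E be a finite-dimensional normed real vector space, and let f : [0,T] × ℝ^d × U → E be Borel-measurable and, for each fixed t, continuous in x ∈ ℝ^d uniformly with respect to u ∈ U. Assume |f(t,x,u)| ≤ c·|x|^δ + ϑ(t,u) for all (t,x,u), where c > 0, δ ≥ 1 and ϑ : [0,T] × U → [0,∞] is measurable. Let μ be a Young measure on U over [0,T] with ∫_{U×[0,T]} ϑ(t,u) μ(du,dt) < ∞, and fix t ∈ [0,T]. Then the map x ↦ ∫_{U×[0,t]} f(s, x(s), u) μ(du,ds) is continuous from C([0,T];ℝ^d) (supremum norm) to E: if x_n → x uniformly on [0,T], then ∫_{U×[0,t]} f(s,x_n(s),u) μ(du,ds) → ∫_{U×[0,t]} f(s,x(s),u) μ(du,ds). -/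
open MeasureTheory Set Filter Topology ENNReal NNReal

/-- Continuity in `x ∈ C([0,T];ℝᵈ)` of the relaxed integral functional
`x ↦ ∫_{U×[0,t]} f(s, x(s), u) μ(du,ds)` for a Young measure `μ` with `∫ ϑ dμ < ∞`. -/
theorem young_integral_continuous_in_x
    (d : ℕ) (T : ℝ) (hT : 0 < T)
    (U : Type*) [TopologicalSpace U] [MeasurableSpace U] [BorelSpace U]
    (E : Type*) [NormedAddCommGroup E] [NormedSpace ℝ E] [FiniteDimensional ℝ E]
    [MeasurableSpace E] [BorelSpace E]
    (f : ℝ → EuclideanSpace ℝ (Fin d) → U → E)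
    (hfmeas : Measurable fun p : ℝ × EuclideanSpace ℝ (Fin d) × U => f p.1 p.2.1 p.2.2)
    (hfx : ∀ (t : ℝ) (x₀ : EuclideanSpace ℝ (Fin d)), ∀ ε > (0:ℝ), ∃ δ' > (0:ℝ),
      ∀ x : EuclideanSpace ℝ (Fin d), ‖x - x₀‖ < δ' → ∀ u : U, ‖f t x u - f t x₀ u‖ < ε)
    (c δ : ℝ) (hc : 0 < c) (hδ : 1 ≤ δ)
    (ϑ : ℝ → U → ℝ≥0∞) (hϑmeas : Measurable fun p : U × ℝ => ϑ p.2 p.1)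
    (hgrowth : ∀ (t : ℝ) (x : EuclideanSpace ℝ (Fin d)) (u : U),
      (‖f t x u‖₊ : ℝ≥0∞) ≤ ENNReal.ofReal (c * ‖x‖ ^ δ) + ϑ t u)
    (μ : Measure (U × ℝ)) (hμ : IsYoungMeasure T μ)
    (hϑint : (∫⁻ p in Set.univ ×ˢ Set.Icc (0:ℝ) T, ϑ p.2 p.1 ∂μ) ≠ ⊤)
    (t : ℝ) (ht : t ∈ Set.Icc (0:ℝ) T) :
    Continuous fun x : C(Set.Icc (0:ℝ) T, EuclideanSpace ℝ (Fin d)) =>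
      ∫ q in Set.univ ×ˢ Set.Icc (0:ℝ) t, f q.2 (x (Set.projIcc 0 T hT.le q.2)) q.1 ∂μ := by
  set S : Set (U × ℝ) := Set.univ ×ˢ Set.Icc (0:ℝ) t with hS
  set ν : Measure (U × ℝ) := μ.restrict S with hν
  -- finiteness of ν
  have hμS : μ S = volume (Set.Icc (0:ℝ) t) := by
    rw [hμ _ measurableSet_Icc, Set.inter_eq_left.mpr (Set.Icc_subset_Icc le_rfl ht.2)]
  haveI : IsFiniteMeasure ν := by
    constructor
    rw [hν, Measure.restrict_apply_univ, hμS, Real.volume_Icc]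
    exact ENNReal.ofReal_lt_top
  -- measurability
  have hmeas : ∀ y : C(Set.Icc (0:ℝ) T, EuclideanSpace ℝ (Fin d)),
      Measurable (fun q : U × ℝ => f q.2 (y (Set.projIcc 0 T hT.le q.2)) q.1) := by
    intro y
    have h1 : Measurable fun q : U × ℝ =>
        ((q.2, ((y (Set.projIcc 0 T hT.le q.2)), q.1)) : ℝ × EuclideanSpace ℝ (Fin d) × U) := by
      refine measurable_snd.prodMk (Measurable.prodMk ?_ measurable_fst)
      exact (y.continuous.comp continuous_projIcc).measurable.comp measurable_snd
    exact hfmeas.comp h1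
  -- a.e. finiteness of ϑ on ν
  have hϑν : (∫⁻ q, ϑ q.2 q.1 ∂ν) ≠ ⊤ := by
    refine ne_top_of_le_ne_top hϑint ?_
    rw [hν]
    exact lintegral_mono_set (Set.prod_mono_right (Set.Icc_subset_Icc le_rfl ht.2))
  have haefin : ∀ᵐ q ∂ν, ϑ q.2 q.1 < ⊤ := ae_lt_top hϑmeas hϑν
  rw [continuous_iff_continuousAt]
  intro x
  have hrpow : (0:ℝ) < δ := lt_of_lt_of_le zero_lt_one hδ
  refine tendsto_integral_filter_of_dominated_convergence
    (fun q => c * (‖x‖ + 1) ^ δ + (ϑ q.2 q.1).toReal) ?_ ?_ ?_ ?_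
  · exact Filter.Eventually.of_forall fun y => (hmeas y).aestronglyMeasurable
  · -- bound
    filter_upwards [Metric.ball_mem_nhds x one_pos] with y hy
    filter_upwards [haefin] with q hq
    have hyx : ‖y (Set.projIcc 0 T hT.le q.2)‖ ≤ ‖x‖ + 1 := by
      have h1 : ‖y (Set.projIcc 0 T hT.le q.2)‖ ≤ ‖y‖ := y.norm_coe_le_norm _
      have h2 : ‖y‖ ≤ ‖x‖ + ‖y - x‖ := by
        calc ‖y‖ = ‖x + (y - x)‖ := by rw [add_sub_cancel]
        _ ≤ ‖x‖ + ‖y - x‖ := norm_add_le _ _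
      have h3 : ‖y - x‖ < 1 := by rwa [Metric.mem_ball, dist_eq_norm] at hy
      linarith
    have hmono : c * ‖y (Set.projIcc 0 T hT.le q.2)‖ ^ δ ≤ c * (‖x‖ + 1) ^ δ :=
      mul_le_mul_of_nonneg_left (Real.rpow_le_rpow (norm_nonneg _) hyx hrpow.le) hc.le
    have h2 : (‖f q.2 (y (Set.projIcc 0 T hT.le q.2)) q.1‖₊ : ℝ≥0∞)
        ≤ ENNReal.ofReal (c * (‖x‖ + 1) ^ δ) + ϑ q.2 q.1 :=
      (hgrowth _ _ _).trans (add_le_add_left (ENNReal.ofReal_le_ofReal hmono) _)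
    have hne : ENNReal.ofReal (c * (‖x‖ + 1) ^ δ) + ϑ q.2 q.1 ≠ ⊤ :=
      ENNReal.add_ne_top.mpr ⟨ENNReal.ofReal_ne_top, hq.ne⟩
    have h3 := ENNReal.toReal_mono hne h2
    rw [ENNReal.coe_toReal, coe_nnnorm, ENNReal.toReal_add ENNReal.ofReal_ne_top hq.ne,
      ENNReal.toReal_ofReal (mul_nonneg hc.le (Real.rpow_nonneg (by positivity) _))] at h3
    exact h3
  · -- integrability of the bound
    refine Integrable.add (integrable_const _) ?_
    exact integrable_toReal_of_lintegral_ne_top hϑmeas.aemeasurable hϑν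
  · -- pointwise convergence
    refine Filter.Eventually.of_forall fun q => ?_
    rw [Metric.tendsto_nhds]
    intro ε hε
    obtain ⟨δ', hδ'pos, hδ'⟩ := hfx q.2 (x (Set.projIcc 0 T hT.le q.2)) ε hε
    filter_upwards [Metric.ball_mem_nhds x hδ'pos] with y hy
    rw [dist_eq_norm]
    refine hδ' _ ?_ _
    have h1 : ‖(y - x) (Set.projIcc 0 T hT.le q.2)‖ ≤ ‖y - x‖ := (y - x).norm_coe_le_norm _
    have h3 : ‖y - x‖ < δ' := by rwa [Metric.mem_ball, dist_eq_norm] at hy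
    rw [ContinuousMap.sub_apply] at h1
    linarith
end

section
/- Let T > 0 and let U be a metrizable Suslin space. Let f : [0,T] × U → ℝ be measurable with f(t,·) bounded and continuous on U for each t ∈ [0,T], and suppose there exists G ∈ L¹([0,T];ℝ) with sup_{u∈U} |f(t,u)| ≤ G(t) for a.e. t ∈ [0,T]. If (μ_n) is a sequence of Young measures on U over [0,T] converging stably to a Young measure μ, then lim_{n→∞} ∫_{U×[0,T]} f(t,u) μ_n(du,dt) = ∫_{U×[0,T]} f(t,u) μ(du,dt). -/
open MeasureTheory Set Filter Topology ENNReal NNReal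

namespace YMAux

variable {U : Type*} [MeasurableSpace U] {T : ℝ} {ν : Measure (U × ℝ)}

lemma map_snd (hν : IsYoungMeasure T ν) :
    ν.map Prod.snd = volume.restrict (Set.Icc 0 T) := by
  ext D hD
  rw [Measure.map_apply measurable_snd hD, Measure.restrict_apply hD]
  have h : (Prod.snd ⁻¹' D : Set (U × ℝ)) = Set.univ ×ˢ D := by
    ext p; simp
  rw [h, hν D hD]

lemma finite (hν : IsYoungMeasure T ν) : IsFiniteMeasure ν := by
  constructor
  have h : (Set.univ : Set (U × ℝ)) = Set.univ ×ˢ (Set.univ : Set ℝ) := by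
    rw [Set.univ_prod_univ]
  rw [h, hν Set.univ MeasurableSet.univ, Set.univ_inter]
  exact measure_Icc_lt_top

lemma ae_mem (hν : IsYoungMeasure T ν) :
    ∀ᵐ p ∂ν, p ∈ (Set.univ ×ˢ Set.Icc (0:ℝ) T : Set (U × ℝ)) := by
  rw [MeasureTheory.ae_iff]
  have h : {p : U × ℝ | ¬ p ∈ (Set.univ ×ˢ Set.Icc (0:ℝ) T : Set (U × ℝ))}
      = Set.univ ×ˢ (Set.Icc (0:ℝ) T)ᶜ := by
    ext p; simp
  rw [h, hν _ (measurableSet_Icc.compl), Set.compl_inter_self, measure_empty]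

lemma restrict_eq (hν : IsYoungMeasure T ν) :
    ν.restrict (Set.univ ×ˢ Set.Icc (0:ℝ) T) = ν :=
  Measure.restrict_eq_self_of_ae_mem (ae_mem hν)

lemma ae_snd (hν : IsYoungMeasure T ν) {p : ℝ → Prop}
    (h : ∀ᵐ t ∂(volume.restrict (Set.Icc (0:ℝ) T)), p t) : ∀ᵐ q ∂ν, p q.2 := by
  rw [← map_snd hν] at h
  exact MeasureTheory.ae_of_ae_map measurable_snd.aemeasurable h

lemma integral_snd (hν : IsYoungMeasure T ν) {φ : ℝ → ℝ}
    (hφ : AEStronglyMeasurable φ (volume.restrict (Set.Icc (0:ℝ) T))) :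
    ∫ q, φ q.2 ∂ν = ∫ t in Set.Icc (0:ℝ) T, φ t := by
  rw [← map_snd hν] at hφ ⊢
  exact (integral_map measurable_snd.aemeasurable hφ).symm

lemma integrable_snd (hν : IsYoungMeasure T ν) {φ : ℝ → ℝ}
    (hφ : IntegrableOn φ (Set.Icc (0:ℝ) T)) :
    Integrable (fun q : U × ℝ => φ q.2) ν := by
  have h : Integrable φ (ν.map Prod.snd) := by rw [map_snd hν]; exact hφ
  exact h.comp_measurable measurable_snd

end YMAux

section InfAux

lemma measurable_inf' {δ : Type*} [MeasurableSpace δ] {ι : Type*} (s : Finset ι)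
    (hs : s.Nonempty) (F : ι → δ → ℝ) (hF : ∀ i, Measurable (F i)) :
    Measurable fun x => s.inf' hs fun i => F i x := by
  induction hs using Finset.Nonempty.cons_induction with
  | singleton a =>
      have : (fun x => ({a} : Finset ι).inf' (Finset.singleton_nonempty a) fun i => F i x)
          = F a := by ext x; simp
      rw [this]; exact hF a
  | cons a t hat ht ih =>
      have : (fun x => (Finset.cons a t hat).inf' (Finset.cons_nonempty hat) fun i => F i x)
          = fun x => min (F a x) (t.inf' ht fun i => F i x) := by
        ext x; rw [Finset.inf'_cons]
      rw [this]; exact (hF a).min ih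

lemma continuous_inf' {δ : Type*} [TopologicalSpace δ] {ι : Type*} (s : Finset ι)
    (hs : s.Nonempty) (F : ι → δ → ℝ) (hF : ∀ i, Continuous (F i)) :
    Continuous fun x => s.inf' hs fun i => F i x := by
  induction hs using Finset.Nonempty.cons_induction with
  | singleton a =>
      have : (fun x => ({a} : Finset ι).inf' (Finset.singleton_nonempty a) fun i => F i x)
          = F a := by ext x; simp
      rw [this]; exact hF a
  | cons a t hat ht ih =>
      have : (fun x => (Finset.cons a t hat).inf' (Finset.cons_nonempty hat) fun i => F i x)
          = fun x => min (F a x) (t.inf' ht fun i => F i x) := by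
        ext x; rw [Finset.inf'_cons]
      rw [this]; exact (hF a).min ih

lemma abs_inf'_sub_inf'_le {ι : Type*} (s : Finset ι) (hs : s.Nonempty) (F F' : ι → ℝ)
    {c : ℝ} (hc : ∀ i ∈ s, |F i - F' i| ≤ c) :
    |s.inf' hs F - s.inf' hs F'| ≤ c := by
  rw [abs_le]
  constructor
  · obtain ⟨j, hj, hjeq⟩ := Finset.exists_mem_eq_inf' hs F
    have h1 : s.inf' hs F' ≤ F' j := Finset.inf'_le _ hj
    have h2 := (abs_le.1 (hc j hj)).1
    linarith [hjeq ▸ le_refl (s.inf' hs F)]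
  · obtain ⟨j, hj, hjeq⟩ := Finset.exists_mem_eq_inf' hs F'
    have h1 : s.inf' hs F ≤ F j := Finset.inf'_le _ hj
    have h2 := (abs_le.1 (hc j hj)).2
    rw [hjeq]
    linarith

end InfAux

theorem ym_limsup_le
    (T : ℝ) (hT : 0 < T)
    (U : Type*) [TopologicalSpace U] [TopologicalSpace.MetrizableSpace U]
    [MeasurableSpace U] [BorelSpace U] (hU : IsSuslin U)
    (f : ℝ → U → ℝ)
    (hfmeas : Measurable fun p : U × ℝ => f p.2 p.1)
    (hfc : ∀ t : ℝ, Continuous (f t))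
    (hfb : ∀ t : ℝ, ∃ M : ℝ, ∀ u : U, |f t u| ≤ M)
    (G : ℝ → ℝ) (hG : IntegrableOn G (Set.Icc 0 T))
    (hdom : ∀ᵐ t ∂(volume.restrict (Set.Icc (0:ℝ) T)), ∀ u : U, |f t u| ≤ G t)
    (μs : ℕ → Measure (U × ℝ)) (μ : Measure (U × ℝ))
    (hμs : ∀ n, IsYoungMeasure T (μs n)) (hμ : IsYoungMeasure T μ)
    (hconv : StablyTendsTo T μs μ) :
    Filter.limsup (fun n => ∫ p, f p.2 p.1 ∂(μs n)) Filter.atTop ≤ ∫ p, f p.2 p.1 ∂μ := by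
  letI mU : MetricSpace U := TopologicalSpace.metrizableSpaceMetric U
  haveI hsep : TopologicalSpace.SeparableSpace U := by
    obtain ⟨S, ts, hpol, φ, hφc, hφs⟩ := hU
    letI := ts
    haveI := hpol
    haveI : TopologicalSpace.SeparableSpace S := inferInstance
    exact hφs.denseRange.separableSpace hφc
  have hne : Nonempty U := by
    by_contra h
    have hU0 : (Set.univ : Set U) = ∅ := Set.univ_eq_empty_iff.mpr (not_nonempty_iff.mp h)
    have h2 := hμ (Set.Icc 0 T) measurableSet_Icc
    rw [hU0, Set.empty_prod, measure_empty, Set.inter_self, Real.volume_Icc] at h2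
    rw [eq_comm, ENNReal.ofReal_eq_zero] at h2
    linarith
  obtain ⟨u_, hu_⟩ : ∃ u_ : ℕ → U, DenseRange u_ := TopologicalSpace.exists_dense_seq U
  have hdense : ∀ (v : U) (δ : ℝ), 0 < δ → ∃ i, dist (u_ i) v < δ := by
    intro v δ hδ
    obtain ⟨i, hi⟩ := Metric.denseRange_iff.1 hu_ v δ hδ
    exact ⟨i, by rwa [dist_comm]⟩
  set d' : U → U → ℝ := fun u v => min (dist u v) 1 with hd'def
  have hd0 : ∀ u, d' u u = 0 := by intro u; simp [hd'def]
  have hdsymm : ∀ u v, d' u v = d' v u := by intro u v; simp [hd'def, dist_comm]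
  have hdnn : ∀ u v, 0 ≤ d' u v := fun u v => le_min dist_nonneg zero_le_one
  have hdle1 : ∀ u v, d' u v ≤ 1 := fun u v => min_le_right _ _
  have hdtri : ∀ u v w, d' u v ≤ d' u w + d' w v := by
    intro u v w
    have h1 : d' u v ≤ min (dist u w + dist w v) 1 :=
      min_le_min (dist_triangle u w v) le_rfl
    refine h1.trans ?_
    rcases le_total 1 (dist u w) with h | h
    · have e1 : d' u w = 1 := min_eq_right h
      have := min_le_right (dist u w + dist w v) 1
      have := hdnn w v
      rw [e1]; linarith
    · rcases le_total 1 (dist w v) with h' | h'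
      · have e1 : d' w v = 1 := min_eq_right h'
        have := min_le_right (dist u w + dist w v) 1
        have := hdnn u w
        rw [e1]; linarith
      · have e1 : d' u w = dist u w := min_eq_left h
        have e2 : d' w v = dist w v := min_eq_left h'
        have := min_le_left (dist u w + dist w v) 1
        rw [e1, e2]; linarith
  have hdcont : ∀ w, Continuous fun v => d' w v :=
    fun w => (continuous_const.dist continuous_id).min continuous_const
  choose Mb hMb using hfb
  have hfle : ∀ t u, f t u ≤ Mb t := fun t u => (abs_le.1 (hMb t u)).2
  have hbdd : ∀ (k : ℕ) (t : ℝ) (w : U),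
      BddAbove (Set.range fun v => f t v - (k : ℝ) * d' w v) := by
    intro k t w
    refine ⟨Mb t, ?_⟩
    rintro x ⟨v, rfl⟩
    have h1 := hfle t v
    have h2 : 0 ≤ (k : ℝ) * d' w v := mul_nonneg (Nat.cast_nonneg k) (hdnn w v)
    simp only []
    linarith
  set fk : ℕ → ℝ → U → ℝ := fun k t w => ⨆ v, (f t v - (k : ℝ) * d' w v) with hfkdef
  have hfk_ge : ∀ k t w, f t w ≤ fk k t w := by
    intro k t w
    have := le_ciSup (hbdd k t w) w
    simpa [hd0 w] using this
  have hfk_term : ∀ (k : ℕ) (t : ℝ) (w v : U), f t v - (k : ℝ) * d' w v ≤ fk k t w :=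
    fun k t w v => le_ciSup (hbdd k t w) v
  have hfk_leMb : ∀ k t w, fk k t w ≤ Mb t := by
    intro k t w
    refine ciSup_le fun v => ?_
    have h2 : 0 ≤ (k : ℝ) * d' w v := mul_nonneg (Nat.cast_nonneg k) (hdnn w v)
    have := hfle t v
    linarith
  have hfk_le : ∀ k t w, (∀ u, |f t u| ≤ G t) → fk k t w ≤ G t := by
    intro k t w h
    refine ciSup_le fun v => ?_
    have h2 : 0 ≤ (k : ℝ) * d' w v := mul_nonneg (Nat.cast_nonneg k) (hdnn w v)
    have := (abs_le.1 (h v)).2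
    linarith
  have hfk_lip : ∀ (k : ℕ) (t : ℝ) (w w' : U), fk k t w ≤ fk k t w' + (k : ℝ) * d' w' w := by
    intro k t w w'
    refine ciSup_le fun v => ?_
    have h1 : d' w' v ≤ d' w' w + d' w v := hdtri w' v w
    have h2 : f t v - (k : ℝ) * d' w' v ≤ fk k t w' := hfk_term k t w' v
    have h3 : (k : ℝ) * d' w' v ≤ (k : ℝ) * (d' w' w + d' w v) :=
      mul_le_mul_of_nonneg_left h1 (Nat.cast_nonneg k)
    rw [mul_add] at h3
    linarith
  have hfk_anti : ∀ t w, Antitone fun k : ℕ => fk k t w := by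
    intro t w k k' hkk'
    refine ciSup_le fun v => ?_
    refine le_trans ?_ (hfk_term k t w v)
    have : (k : ℝ) * d' w v ≤ (k' : ℝ) * d' w v :=
      mul_le_mul_of_nonneg_right (Nat.cast_le.2 hkk') (hdnn w v)
    linarith
  have hfk_tendsto : ∀ t w, Filter.Tendsto (fun k : ℕ => fk k t w) Filter.atTop
      (nhds (f t w)) := by
    intro t w
    rw [Metric.tendsto_atTop]
    intro ε hε
    obtain ⟨δ, hδpos, hδ⟩ : ∃ δ > 0, ∀ v, dist v w < δ → |f t v - f t w| < ε / 2 := by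
      have := Metric.continuous_iff.1 (hfc t) w (ε / 2) (by positivity)
      obtain ⟨δ, hδpos, hδ⟩ := this
      exact ⟨δ, hδpos, fun v hv => by simpa [Real.dist_eq] using hδ v hv⟩
    set δ' : ℝ := min δ 1 with hδ'def
    have hδ'pos : 0 < δ' := lt_min hδpos one_pos
    refine ⟨Nat.ceil ((Mb t - f t w) / δ'), fun k hk => ?_⟩
    have hup : fk k t w ≤ f t w + ε / 2 := by
      refine ciSup_le fun v => ?_
      rcases lt_or_ge (d' w v) δ' with h | h
      · have hdist : dist w v < δ := by
          rcases le_total (dist w v) 1 with hc | hc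
          · have : d' w v = dist w v := min_eq_left hc
            rw [this] at h
            exact h.trans_le (min_le_left _ _)
          · have : d' w v = 1 := min_eq_right hc
            rw [this] at h
            exact absurd h (not_lt.2 ((min_le_right δ 1)))
        have := hδ v (by rwa [dist_comm])
        have h2 : 0 ≤ (k : ℝ) * d' w v := mul_nonneg (Nat.cast_nonneg k) (hdnn w v)
        have := (abs_lt.1 this).2
        linarith
      · have h1 : (Mb t - f t w) / δ' ≤ (k : ℝ) :=
          le_trans (Nat.le_ceil _) (Nat.cast_le.2 hk)
        have h2 : Mb t - f t w ≤ (k : ℝ) * δ' := by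
          rw [div_le_iff₀ hδ'pos] at h1
          linarith
        have h3 : (k : ℝ) * δ' ≤ (k : ℝ) * d' w v :=
          mul_le_mul_of_nonneg_left h (Nat.cast_nonneg k)
        have := hfle t v
        linarith
    have hlo := hfk_ge k t w
    rw [Real.dist_eq, abs_lt]
    constructor <;> linarith
  -- countable representation of fk
  have hbddN : ∀ (k : ℕ) (t : ℝ) (w : U),
      BddAbove (Set.range fun i : ℕ => f t (u_ i) - (k : ℝ) * d' w (u_ i)) := by
    intro k t w
    refine ⟨Mb t, ?_⟩
    rintro x ⟨i, rfl⟩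
    have h2 : 0 ≤ (k : ℝ) * d' w (u_ i) := mul_nonneg (Nat.cast_nonneg k) (hdnn _ _)
    have := hfle t (u_ i)
    simp only []
    linarith
  have hfk_eq : ∀ (k : ℕ) (t : ℝ) (w : U),
      fk k t w = ⨆ i : ℕ, (f t (u_ i) - (k : ℝ) * d' w (u_ i)) := by
    intro k t w
    apply le_antisymm
    · refine ciSup_le fun v => ?_
      refine le_of_forall_pos_le_add fun ε hε => ?_
      have hcont : Continuous fun v' => f t v' - (k : ℝ) * d' w v' :=
        (hfc t).sub (continuous_const.mul (hdcont w))
      obtain ⟨δ, hδpos, hδ⟩ := Metric.continuous_iff.1 hcont v ε hε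
      obtain ⟨i, hi⟩ := hdense v δ hδpos
      have h1 := hδ (u_ i) hi
      rw [Real.dist_eq] at h1
      have h2 := (abs_lt.1 h1).1
      have h3 := le_ciSup (hbddN k t w) i
      linarith
    · exact ciSup_le fun i => hfk_term k t w (u_ i)
  have hmeas_tu : ∀ v : U, Measurable fun t => f t v := by
    intro v
    exact hfmeas.comp (measurable_const.prodMk measurable_id)
  have hak_meas : ∀ (k : ℕ) (w : U), Measurable fun t => fk k t w := by
    intro k w
    have h : (fun t => fk k t w) = fun t => ⨆ i : ℕ, (f t (u_ i) - (k : ℝ) * d' w (u_ i)) :=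
      funext fun t => hfk_eq k t w
    rw [h]
    exact Measurable.iSup fun i => (hmeas_tu (u_ i)).sub measurable_const
  have hfkcomp_meas : ∀ k : ℕ, Measurable fun p : U × ℝ => fk k p.2 p.1 := by
    intro k
    have h : (fun p : U × ℝ => fk k p.2 p.1)
        = fun p : U × ℝ => ⨆ i : ℕ, (f p.2 (u_ i) - (k : ℝ) * d' p.1 (u_ i)) :=
      funext fun p => hfk_eq k p.2 p.1
    rw [h]
    refine Measurable.iSup fun i => Measurable.sub ?_ ?_
    · exact hfmeas.comp (measurable_const.prodMk measurable_snd)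
    · have hc : Continuous fun p : U × ℝ => (k : ℝ) * d' p.1 (u_ i) :=
        continuous_const.mul ((continuous_fst.dist continuous_const).min continuous_const)
      exact hc.measurable
  -- the finite-form approximants
  have hrangene : ∀ m : ℕ, (Finset.range (m + 1)).Nonempty :=
    fun m => ⟨0, Finset.mem_range.2 (Nat.succ_pos m)⟩
  set g : ℕ → ℕ → ℝ → U → ℝ := fun k m t w =>
    (Finset.range (m + 1)).inf' (hrangene m)
      (fun j => fk k t (u_ j) + (k : ℝ) * d' (u_ j) w) with hgdef
  have hg_ge : ∀ k m t w, f t w ≤ g k m t w := by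
    intro k m t w
    refine Finset.le_inf' _ _ fun j _ => ?_
    have := hfk_term k t (u_ j) w
    linarith
  have hg_ge_fk : ∀ k m t w, fk k t w ≤ g k m t w := by
    intro k m t w
    refine Finset.le_inf' _ _ fun j _ => ?_
    exact hfk_lip k t w (u_ j)
  have hg_le0 : ∀ k m t w, g k m t w ≤ fk k t (u_ 0) + (k : ℝ) * d' (u_ 0) w := by
    intro k m t w
    exact Finset.inf'_le _ (Finset.mem_range.2 (Nat.succ_pos m))
  have hg_tendsto : ∀ (k : ℕ) (t : ℝ) (w : U),
      Filter.Tendsto (fun m => g k m t w) Filter.atTop (nhds (fk k t w)) := by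
    intro k t w
    rw [Metric.tendsto_atTop]
    intro ε hε
    have hδpos : 0 < ε / 2 / (2 * (k : ℝ) + 1) := by positivity
    obtain ⟨i, hi⟩ := hdense w (ε / 2 / (2 * (k : ℝ) + 1)) hδpos
    refine ⟨i, fun m hm => ?_⟩
    have hub : g k m t w ≤ fk k t w + ε / 2 := by
      refine le_trans (Finset.inf'_le _ (Finset.mem_range.2 (Nat.lt_succ_of_le hm))) ?_
      have h1 : fk k t (u_ i) ≤ fk k t w + (k : ℝ) * d' w (u_ i) := hfk_lip k t (u_ i) w
      have h2 : d' w (u_ i) ≤ ε / 2 / (2 * (k : ℝ) + 1) := by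
        rw [hdsymm]
        exact le_trans (min_le_left _ _) hi.le
      have h3 : d' (u_ i) w ≤ ε / 2 / (2 * (k : ℝ) + 1) :=
        le_trans (min_le_left _ _) hi.le
      have hk0 : (0:ℝ) ≤ (k : ℝ) := Nat.cast_nonneg k
      have m1 : (k : ℝ) * d' w (u_ i) ≤ (k : ℝ) * (ε / 2 / (2 * (k : ℝ) + 1)) :=
        mul_le_mul_of_nonneg_left h2 hk0
      have m2 : (k : ℝ) * d' (u_ i) w ≤ (k : ℝ) * (ε / 2 / (2 * (k : ℝ) + 1)) :=
        mul_le_mul_of_nonneg_left h3 hk0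
      have h5 : (2 * (k : ℝ) + 1) * (ε / 2 / (2 * (k : ℝ) + 1)) = ε / 2 := by
        field_simp
      nlinarith
    have hlb := hg_ge_fk k m t w
    rw [Real.dist_eq, abs_lt]
    constructor <;> linarith
  have hg_meas : ∀ k m : ℕ, Measurable fun p : U × ℝ => g k m p.2 p.1 := by
    intro k m
    have hrw : (fun p : U × ℝ => g k m p.2 p.1) = fun p : U × ℝ =>
        (Finset.range (m + 1)).inf' (hrangene m)
          (fun j => (fun (j' : ℕ) (p' : U × ℝ) =>
            fk k p'.2 (u_ j') + (k : ℝ) * d' (u_ j') p'.1) j p) := rfl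
    rw [hrw]
    refine measurable_inf' _ (hrangene m) _ (fun j => ?_)
    refine Measurable.add ((hak_meas k (u_ j)).comp measurable_snd) ?_
    exact (continuous_const.mul ((hdcont (u_ j)).comp continuous_fst)).measurable
  -- integrability with respect to Young measures
  have hint_G : ∀ ν : Measure (U × ℝ), IsYoungMeasure T ν →
      Integrable (fun q : U × ℝ => G q.2) ν := fun ν hν => YMAux.integrable_snd hν hG
  have hint_Gk : ∀ (k : ℕ) (ν : Measure (U × ℝ)), IsYoungMeasure T ν →
      Integrable (fun q : U × ℝ => G q.2 + (k : ℝ)) ν := by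
    intro k ν hν
    haveI := YMAux.finite hν
    simpa using (hint_G ν hν).add (integrable_const (k : ℝ))
  have hdomae : ∀ ν : Measure (U × ℝ), IsYoungMeasure T ν →
      ∀ᵐ q ∂ν, ∀ u, |f q.2 u| ≤ G q.2 :=
    fun ν hν => YMAux.ae_snd hν hdom
  have hint_f : ∀ ν : Measure (U × ℝ), IsYoungMeasure T ν →
      Integrable (fun p : U × ℝ => f p.2 p.1) ν := by
    intro ν hν
    refine (hint_G ν hν).mono' hfmeas.aestronglyMeasurable ?_
    filter_upwards [hdomae ν hν] with p hp
    simpa [Real.norm_eq_abs] using hp p.1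
  have hfkbound : ∀ (k : ℕ) (p : U × ℝ), (∀ u, |f p.2 u| ≤ G p.2) →
      ‖fk k p.2 p.1‖ ≤ G p.2 := by
    intro k p hp
    rw [Real.norm_eq_abs, abs_le]
    constructor
    · have h1 := hfk_ge k p.2 p.1
      have h2 := (abs_le.1 (hp p.1)).1
      linarith
    · exact hfk_le k p.2 p.1 hp
  have hint_fk : ∀ (k : ℕ) (ν : Measure (U × ℝ)), IsYoungMeasure T ν →
      Integrable (fun p : U × ℝ => fk k p.2 p.1) ν := by
    intro k ν hν
    refine (hint_G ν hν).mono' (hfkcomp_meas k).aestronglyMeasurable ?_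
    filter_upwards [hdomae ν hν] with p hp
    exact hfkbound k p hp
  have hgbound : ∀ (k m : ℕ) (p : U × ℝ), (∀ u, |f p.2 u| ≤ G p.2) →
      ‖g k m p.2 p.1‖ ≤ G p.2 + (k : ℝ) := by
    intro k m p hp
    rw [Real.norm_eq_abs, abs_le]
    have h3 : (0:ℝ) ≤ (k:ℝ) := Nat.cast_nonneg k
    constructor
    · have h1 := hg_ge k m p.2 p.1
      have h2 := (abs_le.1 (hp p.1)).1
      linarith
    · have h1 := hg_le0 k m p.2 p.1
      have h2 := hfk_le k p.2 (u_ 0) hp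
      have h4 : (k:ℝ) * d' (u_ 0) p.1 ≤ (k:ℝ) * 1 :=
        mul_le_mul_of_nonneg_left (hdle1 _ _) h3
      linarith
  have hint_g : ∀ (k m : ℕ) (ν : Measure (U × ℝ)), IsYoungMeasure T ν →
      Integrable (fun p : U × ℝ => g k m p.2 p.1) ν := by
    intro k m ν hν
    refine (hint_Gk k ν hν).mono' (hg_meas k m).aestronglyMeasurable ?_
    filter_upwards [hdomae ν hν] with p hp
    exact hgbound k m p hp
  -- dominated convergence on the μ side
  have hDCT1 : ∀ k : ℕ, Filter.Tendsto (fun m => ∫ p, g k m p.2 p.1 ∂μ) Filter.atTop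
      (nhds (∫ p, fk k p.2 p.1 ∂μ)) := by
    intro k
    refine MeasureTheory.tendsto_integral_of_dominated_convergence
      (fun p : U × ℝ => G p.2 + (k : ℝ)) (fun m => (hg_meas k m).aestronglyMeasurable)
      (hint_Gk k μ hμ) ?_ ?_
    · intro m
      filter_upwards [hdomae μ hμ] with p hp
      exact hgbound k m p hp
    · exact Filter.Eventually.of_forall fun p => hg_tendsto k p.2 p.1
  have hDCT2 : Filter.Tendsto (fun k : ℕ => ∫ p, fk k p.2 p.1 ∂μ) Filter.atTop
      (nhds (∫ p, f p.2 p.1 ∂μ)) := by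
    refine MeasureTheory.tendsto_integral_of_dominated_convergence
      (fun p : U × ℝ => G p.2) (fun k => (hfkcomp_meas k).aestronglyMeasurable)
      (hint_G μ hμ) ?_ ?_
    · intro k
      filter_upwards [hdomae μ hμ] with p hp
      exact hfkbound k p hp
    · exact Filter.Eventually.of_forall fun p => hfk_tendsto p.2 p.1
  -- uniform bound on the integrals
  have hIbound : ∀ ν : Measure (U × ℝ), IsYoungMeasure T ν →
      |∫ p, f p.2 p.1 ∂ν| ≤ ∫ t in Set.Icc (0:ℝ) T, G t := by
    intro ν hν
    have h1 : ‖∫ p, f p.2 p.1 ∂ν‖ ≤ ∫ p, ‖f p.2 p.1‖ ∂ν := norm_integral_le_integral_norm _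
    rw [Real.norm_eq_abs] at h1
    have h2 : ∫ p, ‖f p.2 p.1‖ ∂ν ≤ ∫ p, G p.2 ∂ν := by
      refine integral_mono_ae (hint_f ν hν).norm (hint_G ν hν) ?_
      filter_upwards [hdomae ν hν] with p hp
      simpa [Real.norm_eq_abs] using hp p.1
    have h3 : ∫ p, G p.2 ∂ν = ∫ t in Set.Icc (0:ℝ) T, G t :=
      YMAux.integral_snd hν hG.aestronglyMeasurable
    linarith
  -- the main estimate
  have key : ∀ ε : ℝ, 0 < ε →
      Filter.limsup (fun n => ∫ p, f p.2 p.1 ∂(μs n)) Filter.atTop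
        ≤ (∫ p, f p.2 p.1 ∂μ) + ε := by
    intro ε hε
    obtain ⟨k, hk⟩ : ∃ k : ℕ, ∫ p, fk k p.2 p.1 ∂μ < (∫ p, f p.2 p.1 ∂μ) + ε / 4 :=
      (hDCT2.eventually (gt_mem_nhds (lt_add_of_pos_right _ (by positivity)))).exists
    obtain ⟨m, hm⟩ : ∃ m : ℕ, ∫ p, g k m p.2 p.1 ∂μ < (∫ p, fk k p.2 p.1 ∂μ) + ε / 4 :=
      ((hDCT1 k).eventually (gt_mem_nhds (lt_add_of_pos_right _ (by positivity)))).exists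
    -- simple-function approximation of the coefficients
    set A : ℝ → (Fin (m + 1) → ℝ) := fun t j => fk k t (u_ (j : ℕ)) with hAdef
    have hAmeas : Measurable A := measurable_pi_lambda _ fun j => hak_meas k (u_ (j : ℕ))
    have hAbound : ∀ᵐ t ∂(volume.restrict (Set.Icc (0:ℝ) T)), ‖A t‖ ≤ G t := by
      filter_upwards [hdom] with t ht
      have hGnn : 0 ≤ G t := le_trans (abs_nonneg _) (ht (u_ 0))
      rw [pi_norm_le_iff_of_nonneg hGnn]
      intro j
      rw [Real.norm_eq_abs, abs_le]
      constructor
      · have h1 := hfk_ge k t (u_ (j : ℕ))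
        have h2 := (abs_le.1 (ht (u_ (j : ℕ)))).1
        simp only [hAdef]
        linarith
      · exact hfk_le k t (u_ (j : ℕ)) ht
    have hAint : Integrable A (volume.restrict (Set.Icc (0:ℝ) T)) :=
      Integrable.mono' hG hAmeas.aestronglyMeasurable hAbound
    have hAmem : MemLp A 1 (volume.restrict (Set.Icc (0:ℝ) T)) :=
      memLp_one_iff_integrable.2 hAint
    obtain ⟨S, hS, hSmem⟩ := hAmem.exists_simpleFunc_eLpNorm_sub_lt
      (by norm_num : (1 : ℝ≥0∞) ≠ ⊤) (ENNReal.ofReal_pos.2 (by positivity : 0 < ε / 4)).ne'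
    have hSint : Integrable S (volume.restrict (Set.Icc (0:ℝ) T)) :=
      memLp_one_iff_integrable.1 hSmem
    have hASint : Integrable (fun t => A t - S t) (volume.restrict (Set.Icc (0:ℝ) T)) :=
      hAint.sub hSint
    have herr : ∫ t in Set.Icc (0:ℝ) T, ‖A t - S t‖ ≤ ε / 4 := by
      have h1 : ENNReal.ofReal (∫ t in Set.Icc (0:ℝ) T, ‖A t - S t‖)
          = ∫⁻ t in Set.Icc (0:ℝ) T, ‖A t - S t‖₊ :=
        ofReal_integral_norm_eq_lintegral_enorm hASint
      have h2 : eLpNorm (A - ⇑S) 1 (volume.restrict (Set.Icc (0:ℝ) T))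
          = ∫⁻ t in Set.Icc (0:ℝ) T, ‖A t - S t‖₊ := by
        rw [eLpNorm_one_eq_lintegral_enorm]; rfl
      have h3 : ENNReal.ofReal (∫ t in Set.Icc (0:ℝ) T, ‖A t - S t‖)
          < ENNReal.ofReal (ε / 4) := by
        rw [h1, ← h2]; exact hS
      exact ((ENNReal.ofReal_lt_ofReal_iff (by positivity)).1 h3).le
    set ScF : (Fin (m + 1) → ℝ) → ℕ → ℝ :=
      fun c j => c ⟨j % (m + 1), Nat.mod_lt j (Nat.succ_pos m)⟩ with hScFdef
    set sfn : ℝ → U → ℝ := fun t w =>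
      (Finset.range (m + 1)).inf' (hrangene m)
        (fun j => ScF (S t) j + (k : ℝ) * d' (u_ j) w) with hsfndef
    have hpoint : ∀ (t : ℝ) (w : U), |g k m t w - sfn t w| ≤ ‖A t - S t‖ := by
      intro t w
      refine abs_inf'_sub_inf'_le _ (hrangene m) _ _ fun j hj => ?_
      have hjlt : j < m + 1 := Finset.mem_range.1 hj
      have hfin : (⟨j % (m + 1), Nat.mod_lt j (Nat.succ_pos m)⟩ : Fin (m + 1))
          = ⟨j, hjlt⟩ := by
        ext
        exact Nat.mod_eq_of_lt hjlt
      have h1 : (fk k t (u_ j) + (k : ℝ) * d' (u_ j) w)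
          - (ScF (S t) j + (k : ℝ) * d' (u_ j) w)
          = (A t - S t) ⟨j, hjlt⟩ := by
        simp only [hScFdef, hfin, hAdef, Pi.sub_apply]
        ring
      rw [h1]
      exact norm_le_pi_norm (A t - S t) _
    have hsfn_meas : Measurable fun p : U × ℝ => sfn p.2 p.1 := by
      have hrw : (fun p : U × ℝ => sfn p.2 p.1) = fun p : U × ℝ =>
          (Finset.range (m + 1)).inf' (hrangene m)
            (fun j => (fun (j' : ℕ) (p' : U × ℝ) =>
              ScF (S p'.2) j' + (k : ℝ) * d' (u_ j') p'.1) j p) := rfl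
      rw [hrw]
      refine measurable_inf' _ (hrangene m) _ fun j => Measurable.add ?_ ?_
      · exact ((measurable_pi_apply _).comp S.measurable).comp measurable_snd
      · exact (continuous_const.mul ((hdcont (u_ j)).comp continuous_fst)).measurable
    obtain ⟨CS, hCS⟩ := S.exists_forall_norm_le
    have hsfn_bound : ∀ (t : ℝ) (w : U), |sfn t w| ≤ CS + (k : ℝ) := by
      intro t w
      have hk0 : (0:ℝ) ≤ (k : ℝ) := Nat.cast_nonneg k
      rw [abs_le]
      constructor
      · refine Finset.le_inf' _ _ fun j hj => ?_
        have h1 : |ScF (S t) j| ≤ CS := by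
          refine le_trans ?_ (hCS t)
          have := norm_le_pi_norm (S t) (⟨j % (m + 1), Nat.mod_lt j (Nat.succ_pos m)⟩ : Fin (m+1))
          simpa [Real.norm_eq_abs, hScFdef] using this
        have h2 : 0 ≤ (k : ℝ) * d' (u_ j) w := mul_nonneg hk0 (hdnn _ _)
        have := (abs_le.1 h1).1
        linarith
      · refine le_trans (Finset.inf'_le _ (Finset.mem_range.2 (Nat.succ_pos m))) ?_
        have h1 : |ScF (S t) 0| ≤ CS := by
          refine le_trans ?_ (hCS t)
          have := norm_le_pi_norm (S t) (⟨0 % (m + 1), Nat.mod_lt 0 (Nat.succ_pos m)⟩ : Fin (m+1))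
          simpa [Real.norm_eq_abs, hScFdef] using this
        have h2 : (k : ℝ) * d' (u_ 0) w ≤ (k : ℝ) * 1 :=
          mul_le_mul_of_nonneg_left (hdle1 _ _) hk0
        have := (abs_le.1 h1).2
        linarith
    have hsint : ∀ ν : Measure (U × ℝ), IsYoungMeasure T ν →
        Integrable (fun p : U × ℝ => sfn p.2 p.1) ν := by
      intro ν hν
      haveI := YMAux.finite hν
      refine Integrable.mono' (integrable_const (CS + (k : ℝ)))
        hsfn_meas.aestronglyMeasurable ?_
      exact Filter.Eventually.of_forall fun p => by
        rw [Real.norm_eq_abs]; exact hsfn_bound p.2 p.1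
    have hnormAS : ∀ ν : Measure (U × ℝ), IsYoungMeasure T ν →
        Integrable (fun p : U × ℝ => ‖A p.2 - S p.2‖) ν :=
      fun ν hν => YMAux.integrable_snd hν hASint.norm
    have hgs : ∀ ν : Measure (U × ℝ), IsYoungMeasure T ν →
        |(∫ p, g k m p.2 p.1 ∂ν) - ∫ p, sfn p.2 p.1 ∂ν| ≤ ε / 4 := by
      intro ν hν
      rw [← integral_sub (hint_g k m ν hν) (hsint ν hν)]
      have h2 : ‖∫ p, (g k m p.2 p.1 - sfn p.2 p.1) ∂ν‖
          ≤ ∫ p, ‖g k m p.2 p.1 - sfn p.2 p.1‖ ∂ν := norm_integral_le_integral_norm _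
      rw [Real.norm_eq_abs] at h2
      have h3 : ∫ p, ‖g k m p.2 p.1 - sfn p.2 p.1‖ ∂ν ≤ ∫ p, ‖A p.2 - S p.2‖ ∂ν := by
        refine integral_mono_ae ((hint_g k m ν hν).sub (hsint ν hν)).norm (hnormAS ν hν) ?_
        exact Filter.Eventually.of_forall fun p =>
          le_trans (le_of_eq (Real.norm_eq_abs _)) (hpoint p.2 p.1)
      have h4 : ∫ p, ‖A p.2 - S p.2‖ ∂ν = ∫ t in Set.Icc (0:ℝ) T, ‖A t - S t‖ :=
        YMAux.integral_snd hν hASint.norm.aestronglyMeasurable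
      linarith
    -- bounded continuous pieces
    have hbcf : ∀ c : Fin (m + 1) → ℝ, ∃ φ : BoundedContinuousFunction U ℝ,
        ∀ w, φ w = (Finset.range (m + 1)).inf' (hrangene m)
          (fun j => ScF c j + (k : ℝ) * d' (u_ j) w) := by
      intro c
      have hcont : Continuous fun w : U => (Finset.range (m + 1)).inf' (hrangene m)
          (fun j => (fun (j' : ℕ) (w' : U) => ScF c j' + (k : ℝ) * d' (u_ j') w') j w) :=
        continuous_inf' _ (hrangene m) _
          (fun j => continuous_const.add (continuous_const.mul (hdcont (u_ j))))
      refine ⟨BoundedContinuousFunction.ofNormedAddCommGroup _ hcont (‖c‖ + (k : ℝ)) ?_,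
        fun w => rfl⟩
      intro w
      rw [Real.norm_eq_abs, abs_le]
      have hk0 : (0:ℝ) ≤ (k : ℝ) := Nat.cast_nonneg k
      constructor
      · refine Finset.le_inf' _ _ fun j hj => ?_
        show -(‖c‖ + (k : ℝ)) ≤ ScF c j + (k : ℝ) * d' (u_ j) w
        have h1 : |ScF c j| ≤ ‖c‖ := by
          have := norm_le_pi_norm c (⟨j % (m + 1), Nat.mod_lt j (Nat.succ_pos m)⟩ : Fin (m+1))
          simpa [Real.norm_eq_abs, hScFdef] using this
        have h2 : 0 ≤ (k : ℝ) * d' (u_ j) w := mul_nonneg hk0 (hdnn _ _)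
        have := (abs_le.1 h1).1
        linarith
      · refine le_trans (Finset.inf'_le _ (Finset.mem_range.2 (Nat.succ_pos m))) ?_
        show ScF c 0 + (k : ℝ) * d' (u_ 0) w ≤ ‖c‖ + (k : ℝ)
        have h1 : |ScF c 0| ≤ ‖c‖ := by
          have := norm_le_pi_norm c (⟨0 % (m + 1), Nat.mod_lt 0 (Nat.succ_pos m)⟩ : Fin (m+1))
          simpa [Real.norm_eq_abs, hScFdef] using this
        have h2 : (k : ℝ) * d' (u_ 0) w ≤ (k : ℝ) * 1 :=
          mul_le_mul_of_nonneg_left (hdle1 _ _) hk0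
        have := (abs_le.1 h1).2
        linarith
    choose Φ hΦ using hbcf
    set Dc : (Fin (m + 1) → ℝ) → Set ℝ := fun c => ⇑S ⁻¹' {c} ∩ Set.Icc 0 T with hDcdef
    have hDmeas : ∀ c, MeasurableSet (Dc c) :=
      fun c => (S.measurableSet_fiber c).inter measurableSet_Icc
    have hdecomp : ∀ ν : Measure (U × ℝ), IsYoungMeasure T ν →
        ∫ p, sfn p.2 p.1 ∂ν
          = ∑ c ∈ S.range, ∫ p in Set.univ ×ˢ Dc c, (Φ c) p.1 ∂ν := by
      intro ν hν
      have hres := YMAux.restrict_eq hν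
      have huni : (Set.univ ×ˢ Set.Icc (0:ℝ) T : Set (U × ℝ))
          = ⋃ c ∈ S.range, Set.univ ×ˢ Dc c := by
        ext p
        simp only [Set.mem_prod, Set.mem_univ, true_and, Set.mem_iUnion, hDcdef,
          Set.mem_inter_iff, Set.mem_preimage, Set.mem_singleton_iff]
        constructor
        · intro hp
          exact ⟨S p.2, S.mem_range_self p.2, rfl, hp⟩
        · rintro ⟨c, _, _, hp⟩
          exact hp
      calc ∫ p, sfn p.2 p.1 ∂ν
          = ∫ p in Set.univ ×ˢ Set.Icc (0:ℝ) T, sfn p.2 p.1 ∂ν := by rw [hres]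
        _ = ∫ p in ⋃ c ∈ S.range, Set.univ ×ˢ Dc c, sfn p.2 p.1 ∂ν := by rw [← huni]
        _ = ∑ c ∈ S.range, ∫ p in Set.univ ×ˢ Dc c, sfn p.2 p.1 ∂ν := by
            refine integral_biUnion_finset S.range
              (fun c _ => MeasurableSet.univ.prod (hDmeas c)) ?_
              (fun c _ => (hsint ν hν).integrableOn)
            intro c hc c' hc' hne
            rw [Function.onFun, Set.disjoint_left]
            rintro p ⟨-, hp2, -⟩ ⟨-, hp2', -⟩
            exact hne (hp2 ▸ hp2')
        _ = ∑ c ∈ S.range, ∫ p in Set.univ ×ˢ Dc c, (Φ c) p.1 ∂ν := by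
            refine Finset.sum_congr rfl fun c hcmem => ?_
            refine setIntegral_congr_fun (MeasurableSet.univ.prod (hDmeas c)) ?_
            rintro p ⟨-, hp2, -⟩
            have hSp : S p.2 = c := hp2
            show sfn p.2 p.1 = (Φ c) p.1
            rw [hΦ c p.1, hsfndef]
            simp only [hSp]
    have hstend : Filter.Tendsto (fun n => ∫ p, sfn p.2 p.1 ∂(μs n)) Filter.atTop
        (nhds (∫ p, sfn p.2 p.1 ∂μ)) := by
      have h1 : (fun n => ∫ p, sfn p.2 p.1 ∂(μs n))
          = fun n => ∑ c ∈ S.range, ∫ p in Set.univ ×ˢ Dc c, (Φ c) p.1 ∂(μs n) :=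
        funext fun n => hdecomp (μs n) (hμs n)
      rw [h1, hdecomp μ hμ]
      exact tendsto_finset_sum _ fun c _ =>
        hconv (Dc c) (hDmeas c) Set.inter_subset_right (Φ c)
    -- final assembly
    have hchain : ∀ n, ∫ p, f p.2 p.1 ∂(μs n) ≤ ∫ p, sfn p.2 p.1 ∂(μs n) + ε / 4 := by
      intro n
      have h1 : ∫ p, f p.2 p.1 ∂(μs n) ≤ ∫ p, g k m p.2 p.1 ∂(μs n) :=
        integral_mono_ae (hint_f _ (hμs n)) (hint_g k m _ (hμs n))
          (Filter.Eventually.of_forall fun p => hg_ge k m p.2 p.1)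
      have h2 := (abs_le.1 (hgs (μs n) (hμs n))).2
      linarith
    have hJ : Filter.Tendsto (fun n => ∫ p, sfn p.2 p.1 ∂(μs n) + ε / 4) Filter.atTop
        (nhds ((∫ p, sfn p.2 p.1 ∂μ) + ε / 4)) := hstend.add_const _
    have hco : Filter.IsCoboundedUnder (· ≤ ·) Filter.atTop
        (fun n => ∫ p, f p.2 p.1 ∂(μs n)) := by
      refine Filter.IsBoundedUnder.isCoboundedUnder_le ?_
      exact Filter.isBoundedUnder_of ⟨-(∫ t in Set.Icc (0:ℝ) T, G t),
        fun n => (abs_le.1 (hIbound (μs n) (hμs n))).1⟩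
    have hls : Filter.limsup (fun n => ∫ p, f p.2 p.1 ∂(μs n)) Filter.atTop
        ≤ Filter.limsup (fun n => ∫ p, sfn p.2 p.1 ∂(μs n) + ε / 4) Filter.atTop :=
      Filter.limsup_le_limsup (Filter.Eventually.of_forall hchain) hco hJ.isBoundedUnder_le
    have hlseq : Filter.limsup (fun n => ∫ p, sfn p.2 p.1 ∂(μs n) + ε / 4) Filter.atTop
        = (∫ p, sfn p.2 p.1 ∂μ) + ε / 4 := hJ.limsup_eq
    rw [hlseq] at hls
    have h2 := (abs_le.1 (hgs μ hμ)).1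
    have hstep : (∫ p, sfn p.2 p.1 ∂μ) + ε / 4 ≤ (∫ p, f p.2 p.1 ∂μ) + ε := by
      linarith only [h2, hm, hk]
    exact hls.trans hstep
  exact le_of_forall_pos_le_add key

lemma liminf_eq_neg_limsup_neg (u : ℕ → ℝ) :
    Filter.liminf u Filter.atTop = - Filter.limsup (fun n => - u n) Filter.atTop := by
  rw [Filter.liminf_eq, Filter.limsup_eq, Real.sInf_def, neg_neg]
  congr 1
  ext a
  simp only [Set.mem_neg, Set.mem_setOf_eq, neg_le_neg_iff]

lemma ym_abs_integral_le
    {U : Type*} [MeasurableSpace U] {T : ℝ}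
    {f : ℝ → U → ℝ}
    (hfmeas : Measurable fun p : U × ℝ => f p.2 p.1)
    {G : ℝ → ℝ} (hG : IntegrableOn G (Set.Icc 0 T))
    (hdom : ∀ᵐ t ∂(volume.restrict (Set.Icc (0:ℝ) T)), ∀ u : U, |f t u| ≤ G t)
    {ν : Measure (U × ℝ)} (hν : IsYoungMeasure T ν) :
    |∫ p, f p.2 p.1 ∂ν| ≤ ∫ t in Set.Icc (0:ℝ) T, G t := by
  have hint_G : Integrable (fun q : U × ℝ => G q.2) ν := YMAux.integrable_snd hν hG
  have hdomae : ∀ᵐ q ∂ν, ∀ u, |f q.2 u| ≤ G q.2 := YMAux.ae_snd hν hdom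
  have hint_f : Integrable (fun p : U × ℝ => f p.2 p.1) ν := by
    refine hint_G.mono' hfmeas.aestronglyMeasurable ?_
    filter_upwards [hdomae] with p hp
    simpa [Real.norm_eq_abs] using hp p.1
  have h1 : ‖∫ p, f p.2 p.1 ∂ν‖ ≤ ∫ p, ‖f p.2 p.1‖ ∂ν := norm_integral_le_integral_norm _
  rw [Real.norm_eq_abs] at h1
  have h2 : ∫ p, ‖f p.2 p.1‖ ∂ν ≤ ∫ p, G p.2 ∂ν := by
    refine integral_mono_ae hint_f.norm hint_G ?_
    filter_upwards [hdomae] with p hp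
    simpa [Real.norm_eq_abs] using hp p.1
  have h3 : ∫ p, G p.2 ∂ν = ∫ t in Set.Icc (0:ℝ) T, G t :=
    YMAux.integral_snd hν hG.aestronglyMeasurable
  linarith

/-- Stable convergence of Young measures extends from test functions
`f(u)·1_D(t)` to all integrands `f ∈ L¹(0,T; C_b(U))`. -/
theorem young_measure_integral_tendsto_stable
    (T : ℝ) (hT : 0 < T)
    (U : Type*) [TopologicalSpace U] [TopologicalSpace.MetrizableSpace U]
    [MeasurableSpace U] [BorelSpace U] (hU : IsSuslin U)
    (f : ℝ → U → ℝ)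
    (hfmeas : Measurable fun p : U × ℝ => f p.2 p.1)
    (hfc : ∀ t : ℝ, Continuous (f t))
    (hfb : ∀ t : ℝ, ∃ M : ℝ, ∀ u : U, |f t u| ≤ M)
    (G : ℝ → ℝ) (hG : IntegrableOn G (Set.Icc 0 T))
    (hdom : ∀ᵐ t ∂(volume.restrict (Set.Icc (0:ℝ) T)), ∀ u : U, |f t u| ≤ G t)
    (μs : ℕ → Measure (U × ℝ)) (μ : Measure (U × ℝ))
    (hμs : ∀ n, IsYoungMeasure T (μs n)) (hμ : IsYoungMeasure T μ)
    (hconv : StablyTendsTo T μs μ) :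
    Filter.Tendsto
      (fun n => ∫ p in Set.univ ×ˢ Set.Icc (0:ℝ) T, f p.2 p.1 ∂(μs n)) Filter.atTop
      (nhds (∫ p in Set.univ ×ˢ Set.Icc (0:ℝ) T, f p.2 p.1 ∂μ)) := by
  have hrw : ∀ ν : Measure (U × ℝ), IsYoungMeasure T ν →
      (∫ p in Set.univ ×ˢ Set.Icc (0:ℝ) T, f p.2 p.1 ∂ν) = ∫ p, f p.2 p.1 ∂ν :=
    fun ν hν => by rw [YMAux.restrict_eq hν]
  have hrw1 : (fun n => ∫ p in Set.univ ×ˢ Set.Icc (0:ℝ) T, f p.2 p.1 ∂(μs n))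
      = fun n => ∫ p, f p.2 p.1 ∂(μs n) := funext fun n => hrw (μs n) (hμs n)
  rw [hrw1, hrw μ hμ]
  have hup := ym_limsup_le T hT U hU f hfmeas hfc hfb G hG hdom μs μ hμs hμ hconv
  have hdom' : ∀ᵐ t ∂(volume.restrict (Set.Icc (0:ℝ) T)), ∀ u : U, |(-f t u)| ≤ G t := by
    filter_upwards [hdom] with t ht u
    simpa using ht u
  have hupneg := ym_limsup_le T hT U hU (fun t u => - f t u) hfmeas.neg
    (fun t => (hfc t).neg) (fun t => (hfb t).imp fun M hM u => by simpa using hM u)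
    G hG hdom' μs μ hμs hμ hconv
  have he : (fun n => ∫ p, (fun t u => - f t u) p.2 p.1 ∂(μs n))
      = fun n => - ∫ p, f p.2 p.1 ∂(μs n) := funext fun n => integral_neg _
  have he2 : (∫ p, (fun t u => - f t u) p.2 p.1 ∂μ) = - ∫ p, f p.2 p.1 ∂μ :=
    integral_neg _
  rw [he, he2] at hupneg
  have hliminf : (∫ p, f p.2 p.1 ∂μ)
      ≤ Filter.liminf (fun n => ∫ p, f p.2 p.1 ∂(μs n)) Filter.atTop := by
    rw [liminf_eq_neg_limsup_neg]
    linarith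
  refine tendsto_of_le_liminf_of_limsup_le hliminf hup ?_ ?_
  · exact Filter.isBoundedUnder_of ⟨∫ t in Set.Icc (0:ℝ) T, G t,
      fun n => (abs_le.1 (ym_abs_integral_le hfmeas hG hdom (hμs n))).2⟩
  · exact Filter.isBoundedUnder_of ⟨-(∫ t in Set.Icc (0:ℝ) T, G t),
      fun n => (abs_le.1 (ym_abs_integral_le hfmeas hG hdom (hμs n))).1⟩
end

section
/- Let T > 0, let S and U be separable metric spaces, let y_n : [0,T] → S (n ∈ ℕ) be measurable maps converging pointwise on [0,T] to a map y : [0,T] → S, and let (μ_n) be a sequence of Young measures on U over [0,T] converging stably to a Young measure μ. For a measurable map z : [0,T] → S and a Young measure ν on U over [0,T], define the Young measure δ_z ⊗ ν on S × U over [0,T] as the pushforward of ν under the map (u,t) ↦ (z(t), u, t). Then δ_{y_n} ⊗ μ_n converges stably to δ_y ⊗ μ in the Young measures on S × U over [0,T]: for every Borel set D ⊆ [0,T] and every bounded continuous g : S × U → ℝ, ∫_{U×D} g(y_n(t), u) μ_n(du,dt) → ∫_{U×D} g(y(t), u) μ(du,dt). -/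
open MeasureTheory Set Filter Topology ENNReal NNReal

section Aux
variable {U : Type*} [MeasurableSpace U] {T : ℝ} {μ : Measure (U × ℝ)} {D : Set ℝ}

lemma YM.finite (hμ : IsYoungMeasure T μ) (hD : MeasurableSet D) :
    IsFiniteMeasure (μ.restrict (Set.univ ×ˢ D)) := by
  constructor
  rw [Measure.restrict_apply_univ, hμ D hD]
  exact lt_of_le_of_lt (measure_mono inter_subset_right)
    (by rw [Real.volume_Icc]; exact ofReal_lt_top)

lemma YM.snd_map (hμ : IsYoungMeasure T μ) (hD : MeasurableSet D) (hDT : D ⊆ Set.Icc 0 T) :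
    Measure.map Prod.snd (μ.restrict (Set.univ ×ˢ D)) = volume.restrict D := by
  ext E hE
  rw [Measure.map_apply measurable_snd hE, Measure.restrict_apply (measurable_snd hE),
    Measure.restrict_apply hE]
  have h1 : (Prod.snd ⁻¹' E) ∩ (Set.univ ×ˢ D) = (Set.univ ×ˢ (E ∩ D) : Set (U × ℝ)) := by
    ext p; simp [and_comm]
  rw [h1, hμ _ (hE.inter hD)]
  congr 1
  rw [inter_assoc, inter_eq_self_of_subset_left (hDT.trans subset_rfl)]

lemma YM.mass (hμ : IsYoungMeasure T μ) (hD : MeasurableSet D) (hDT : D ⊆ Set.Icc 0 T) :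
    μ (Set.univ ×ˢ D) = volume D := by
  rw [hμ D hD, inter_eq_self_of_subset_left hDT]

lemma YM.integral_snd (hμ : IsYoungMeasure T μ) (hD : MeasurableSet D) (hDT : D ⊆ Set.Icc 0 T)
    {h : ℝ → ℝ} (hh : Measurable h) :
    ∫ p in Set.univ ×ˢ D, h p.2 ∂μ = ∫ t in D, h t := by
  calc ∫ p in Set.univ ×ˢ D, h p.2 ∂μ
      = ∫ t, h t ∂(Measure.map Prod.snd (μ.restrict (Set.univ ×ˢ D))) :=
        (integral_map measurable_snd.aemeasurable hh.aestronglyMeasurable).symm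
    _ = ∫ t in D, h t := by rw [YM.snd_map hμ hD hDT]

lemma YM.integrable (hμ : IsYoungMeasure T μ) (hD : MeasurableSet D)
    {G : U × ℝ → ℝ} (hG : AEStronglyMeasurable G (μ.restrict (Set.univ ×ˢ D)))
    {C : ℝ} (hC : ∀ p, |G p| ≤ C) : IntegrableOn G (Set.univ ×ˢ D) μ := by
  haveI := YM.finite hμ hD
  exact Integrable.mono' (integrable_const C) hG
    (ae_of_all _ fun p => by rw [Real.norm_eq_abs]; exact hC p)

end Aux

noncomputable def infConv {X : Type*} [MetricSpace X] (g : X → ℝ) (k : ℕ) (p : X) : ℝ :=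
  ⨅ q, (g q + k * dist p q)

section InfConv
set_option linter.unusedSectionVars false
variable {X : Type*} [MetricSpace X] [Nonempty X] {g : X → ℝ} {M : ℝ}

lemma infConv_bddBelow (hM : ∀ p, |g p| ≤ M) (k : ℕ) (p : X) :
    BddBelow (Set.range fun q => g q + k * dist p q) := by
  refine ⟨-M, fun x hx => ?_⟩
  obtain ⟨q, rfl⟩ := hx
  simp only
  have h1 := (abs_le.1 (hM q)).1
  have h2 : (0:ℝ) ≤ k * dist p q := mul_nonneg (Nat.cast_nonneg k) dist_nonneg
  linarith

lemma infConv_le (hM : ∀ p, |g p| ≤ M) (k : ℕ) (p : X) : infConv g k p ≤ g p := by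
  have := ciInf_le (infConv_bddBelow hM k p) p
  simpa [infConv] using this

lemma neg_M_le_infConv (hM : ∀ p, |g p| ≤ M) (k : ℕ) (p : X) : -M ≤ infConv g k p := by
  refine le_ciInf fun q => ?_
  have h1 := (abs_le.1 (hM q)).1
  have h2 : (0:ℝ) ≤ k * dist p q := mul_nonneg (Nat.cast_nonneg k) dist_nonneg
  linarith

lemma abs_infConv_le (hM : ∀ p, |g p| ≤ M) (k : ℕ) (p : X) : |infConv g k p| ≤ M :=
  abs_le.2 ⟨neg_M_le_infConv hM k p, (infConv_le hM k p).trans (abs_le.1 (hM p)).2⟩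

lemma infConv_lipschitz (hM : ∀ p, |g p| ≤ M) (k : ℕ) :
    LipschitzWith (k : ℝ≥0) (infConv g k) := by
  have key : ∀ p p' : X, infConv g k p ≤ infConv g k p' + k * dist p p' := by
    intro p p'
    have : ∀ q, infConv g k p - k * dist p p' ≤ g q + k * dist p' q := by
      intro q
      have h1 : infConv g k p ≤ g q + k * dist p q := ciInf_le (infConv_bddBelow hM k p) q
      have h2 : dist p q ≤ dist p p' + dist p' q := dist_triangle p p' q
      have h3 : (k:ℝ) * dist p q ≤ k * dist p p' + k * dist p' q := by
        rw [← mul_add]; exact mul_le_mul_of_nonneg_left h2 (Nat.cast_nonneg k)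
      linarith
    have := le_ciInf this
    have heq : (⨅ q, (g q + k * dist p' q)) = infConv g k p' := rfl
    linarith [heq ▸ this]
  apply LipschitzWith.of_dist_le_mul
  intro p p'
  rw [Real.dist_eq, abs_le]
  push_cast
  constructor
  · have := key p' p
    rw [dist_comm p' p] at this
    linarith
  · have := key p p'
    linarith

lemma tendsto_infConv (hM : ∀ p, |g p| ≤ M) (hg : Continuous g) (p : X) :
    Tendsto (fun k => infConv g k p) atTop (nhds (g p)) := by
  have hM0 : 0 ≤ M := (abs_nonneg _).trans (hM p)
  rw [Metric.tendsto_atTop]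
  intro ε hε
  obtain ⟨δ, hδ, hδ'⟩ := Metric.continuous_iff.1 hg p (ε/2) (half_pos hε)
  obtain ⟨k₀, hk₀⟩ := exists_nat_ge ((2*M + |g p| + 1)/δ)
  refine ⟨k₀, fun k hk => ?_⟩
  have hlow : g p - ε/2 ≤ infConv g k p := by
    refine le_ciInf fun q => ?_
    by_cases hq : dist q p < δ
    · have := (abs_lt.1 (by rw [← Real.dist_eq]; exact hδ' q hq)).1
      have h2 : (0:ℝ) ≤ k * dist p q := mul_nonneg (Nat.cast_nonneg k) dist_nonneg
      linarith
    · push_neg at hq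
      have hkk : (k₀ : ℝ) ≤ k := Nat.cast_le.2 hk
      have h1 : (2*M + |g p| + 1) ≤ k₀ * δ := by
        rw [div_le_iff₀ hδ] at hk₀; linarith
      have h2 : (k₀:ℝ) * δ ≤ k * dist p q := by
        apply mul_le_mul hkk (by rwa [dist_comm]) (le_of_lt hδ) (Nat.cast_nonneg k)
      have h3 := (abs_le.1 (hM q)).1
      have h5 : -|g p| ≤ g p := neg_abs_le _
      have h6 : g p ≤ |g p| := le_abs_self _
      linarith
  have hup := infConv_le hM k p
  rw [Real.dist_eq]
  have : |infConv g k p - g p| ≤ ε/2 := abs_le.2 ⟨by linarith, by linarith⟩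
  linarith

end InfConv

section Key
set_option linter.unusedSectionVars false
variable {T : ℝ} {S U : Type*} [MetricSpace S] [TopologicalSpace.SeparableSpace S]
    [MetricSpace U] [TopologicalSpace.SeparableSpace U]
    [MeasurableSpace S] [BorelSpace S] [MeasurableSpace U] [BorelSpace U]
    [Nonempty S] [Nonempty U]

lemma key_lipschitz
    (y : ℕ → ℝ → S) (hymeas : ∀ n, Measurable (y n)) (Y : ℝ → S) (hYmeas : Measurable Y)
    (hyconv : ∀ t ∈ Set.Icc (0:ℝ) T, Tendsto (fun n => y n t) atTop (nhds (Y t)))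
    (μs : ℕ → Measure (U × ℝ)) (μ : Measure (U × ℝ))
    (hμs : ∀ n, IsYoungMeasure T (μs n)) (hμ : IsYoungMeasure T μ)
    (hconv : StablyTendsTo T μs μ)
    (D : Set ℝ) (hD : MeasurableSet D) (hDT : D ⊆ Set.Icc 0 T)
    (f : S × U → ℝ) (K : ℝ≥0) (hf : LipschitzWith K f)
    (M : ℝ) (hM : ∀ p, |f p| ≤ M) :
    Tendsto (fun n => ∫ p in Set.univ ×ˢ D, f (y n p.2, p.1) ∂(μs n)) atTop
      (nhds (∫ p in Set.univ ×ˢ D, f (Y p.2, p.1) ∂μ)) := by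
  have hM0 : 0 ≤ M := (abs_nonneg _).trans (hM (Classical.arbitrary _))
  haveI : SecondCountableTopology S := UniformSpace.secondCountable_of_separable S
  haveI : SecondCountableTopology U := UniformSpace.secondCountable_of_separable U
  have hprodD : MeasurableSet (Set.univ ×ˢ D : Set (U × ℝ)) := MeasurableSet.univ.prod hD
  -- measurability of integrands
  have hmeasY : Measurable fun p : U × ℝ => f (Y p.2, p.1) :=
    hf.continuous.measurable.comp ((hYmeas.comp measurable_snd).prodMk measurable_fst)
  have hmeasyn : ∀ n, Measurable fun p : U × ℝ => f (y n p.2, p.1) := fun n =>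
    hf.continuous.measurable.comp (((hymeas n).comp measurable_snd).prodMk measurable_fst)
  -- part (b)
  have hb : Tendsto (fun n => ∫ p in Set.univ ×ˢ D, f (Y p.2, p.1) ∂(μs n)) atTop
      (nhds (∫ p in Set.univ ×ˢ D, f (Y p.2, p.1) ∂μ)) := by
    rw [Metric.tendsto_atTop]
    intro ε hε
    obtain ⟨s, hsdense⟩ := TopologicalSpace.exists_dense_seq S
    have hvolD : volume D < ⊤ :=
      lt_of_le_of_lt (measure_mono hDT) (by rw [Real.volume_Icc]; exact ofReal_lt_top)
    set vD : ℝ := (volume D).toReal with hvDdef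
    have hvD0 : 0 ≤ vD := ENNReal.toReal_nonneg
    set δ : ℝ := ε / 8 / (((K:ℝ) + 1) * (vD + 1)) with hδdef
    have hδpos : 0 < δ := by
      apply div_pos (by linarith)
      have : (0:ℝ) ≤ (K:ℝ) := K.coe_nonneg
      nlinarith
    have hKδ : (K:ℝ) * δ * vD ≤ ε / 8 := by
      have hK0 : (0:ℝ) ≤ (K:ℝ) := K.coe_nonneg
      have h2 : (0:ℝ) < ((K:ℝ)+1)*(vD+1) := by nlinarith
      have h1 : (K:ℝ) * vD ≤ ((K:ℝ)+1)*(vD+1) := by nlinarith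
      calc (K:ℝ) * δ * vD = (ε/8) * (((K:ℝ)*vD)/(((K:ℝ)+1)*(vD+1))) := by
            rw [hδdef]; ring
        _ ≤ (ε/8) * 1 := by
            apply mul_le_mul_of_nonneg_left _ (by linarith)
            rw [div_le_one h2]; exact h1
        _ = ε/8 := mul_one _
    -- the partition of D
    set E : ℕ → Set ℝ := fun i => Y ⁻¹' (Metric.ball (s i) δ) with hEdef
    have hEmeas : ∀ i, MeasurableSet (E i) := fun i => hYmeas measurableSet_ball
    set B : ℕ → Set ℝ := disjointed E with hBdef
    have hBmeas : ∀ i, MeasurableSet (B i) := MeasurableSet.disjointed hEmeas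
    have hBdisj : Pairwise (Function.onFun Disjoint B) := disjoint_disjointed E
    have hBsub : ∀ i, B i ⊆ E i := fun i => disjointed_subset E i
    have hBcover : (⋃ i, B i) = Set.univ := by
      rw [hBdef, iUnion_disjointed]
      ext t
      simp only [mem_iUnion, mem_univ, iff_true, hEdef, mem_preimage, Metric.mem_ball]
      obtain ⟨i, hi⟩ := hsdense.exists_dist_lt (Y t) hδpos
      exact ⟨i, hi⟩
    set A : ℕ → Set ℝ := fun i => D ∩ B i with hAdef
    have hAmeas : ∀ i, MeasurableSet (A i) := fun i => hD.inter (hBmeas i)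
    have hAsub : ∀ i, A i ⊆ D := fun i => inter_subset_left
    -- the tail sets
    set G : ℕ → Set ℝ := fun N => D \ ⋃ i ∈ Finset.range N, B i with hGdef
    have hGmeas : ∀ N, MeasurableSet (G N) := fun N =>
      hD.diff (Finset.measurableSet_biUnion _ fun i _ => hBmeas i)
    have hGanti : Antitone G := by
      intro N N' hNN'
      apply diff_subset_diff_right
      apply biUnion_subset_biUnion_left
      intro i hi
      exact Finset.mem_range.2 (lt_of_lt_of_le (Finset.mem_range.1 hi) hNN')
    have hGinter : (⋂ N, G N) = ∅ := by
      ext t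
      simp only [mem_iInter, mem_empty_iff_false, iff_false]
      intro hcon
      have ht : t ∈ D := (hcon 0).1
      have : t ∈ ⋃ i, B i := by rw [hBcover]; trivial
      obtain ⟨i, hi⟩ := mem_iUnion.1 this
      exact (hcon (i+1)).2 (mem_biUnion (Finset.mem_range.2 (Nat.lt_succ_self i)) hi)
    have hGtend : Tendsto (fun N => volume (G N)) atTop (nhds 0) := by
      have := tendsto_measure_iInter_atTop (μ := volume)
        (fun N => (hGmeas N).nullMeasurableSet) hGanti
        ⟨0, ne_of_lt (lt_of_le_of_lt (measure_mono diff_subset) hvolD)⟩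
      rw [hGinter, measure_empty] at this
      exact this
    have hM1 : (0:ℝ) < M + 1 := by linarith
    obtain ⟨N, hN⟩ := (ENNReal.tendsto_atTop_zero.1 hGtend)
      (ENNReal.ofReal (ε/(8*(M+1)))) (by
        apply ENNReal.ofReal_pos.2
        positivity)
    replace hN := hN N le_rfl
    have hMG : M * (volume (G N)).toReal ≤ ε/8 := by
      have h1 : (volume (G N)).toReal ≤ ε/(8*(M+1)) :=
        ENNReal.toReal_le_of_le_ofReal (by positivity) hN
      have h2 : M * (volume (G N)).toReal ≤ M * (ε/(8*(M+1))) :=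
        mul_le_mul_of_nonneg_left h1 hM0
      refine h2.trans ?_
      have heq : M * (ε / (8 * (M + 1))) = (ε/8) * (M/(M+1)) := by
        field_simp
      rw [heq]
      have h4 : M/(M+1) ≤ 1 := by rw [div_le_one hM1]; linarith
      have h5 : (0:ℝ) ≤ ε/8 := by linarith
      calc (ε/8) * (M/(M+1)) ≤ (ε/8) * 1 := mul_le_mul_of_nonneg_left h4 h5
        _ = ε/8 := mul_one _
    -- the key uniform estimate
    have hsplit : ∀ ν : Measure (U × ℝ), IsYoungMeasure T ν →
        |(∫ p in Set.univ ×ˢ D, f (Y p.2, p.1) ∂ν)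
          - ∑ i ∈ Finset.range N, ∫ p in Set.univ ×ˢ (A i), f (s i, p.1) ∂ν| ≤ ε/4 := by
      intro ν hν
      -- integrability facts
      have hintF : ∀ (X : Set ℝ), MeasurableSet X → X ⊆ D →
          IntegrableOn (fun p : U × ℝ => f (Y p.2, p.1)) (Set.univ ×ˢ X) ν := fun X hX hXD =>
        YM.integrable hν hX hmeasY.aestronglyMeasurable (fun p => hM _)
      have hintc : ∀ i, IntegrableOn (fun p : U × ℝ => f (s i, p.1)) (Set.univ ×ˢ (A i)) ν :=
        fun i => YM.integrable hν (hAmeas i)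
          ((hf.continuous.measurable.comp
            (measurable_const.prodMk measurable_fst)).aestronglyMeasurable) (fun p => hM _)
      -- the splitting of the domain
      have hDeq : (Set.univ ×ˢ D : Set (U × ℝ)) =
          (⋃ i ∈ Finset.range N, Set.univ ×ˢ (A i)) ∪ (Set.univ ×ˢ (G N)) := by
        ext p
        simp only [mem_prod, mem_univ, true_and, mem_union, mem_iUnion, Finset.mem_range,
          hGdef, hAdef, mem_diff, mem_inter_iff, exists_prop]
        constructor
        · intro hp
          by_cases hc : ∃ i < N, p.2 ∈ B i
          · obtain ⟨i, hiN, hiB⟩ := hc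
            exact Or.inl ⟨i, hiN, hp, hiB⟩
          · refine Or.inr ⟨hp, ?_⟩
            intro hmem
            obtain ⟨i, hi, hiB⟩ := hmem
            exact hc ⟨i, hi, hiB⟩
        · rintro (⟨i, _, hp, _⟩ | ⟨hp, _⟩) <;> exact hp
      have hdisjUG : Disjoint (⋃ i ∈ Finset.range N, (Set.univ ×ˢ (A i) : Set (U × ℝ)))
          (Set.univ ×ˢ (G N)) := by
        rw [Set.disjoint_left]
        intro p hp hpG
        obtain ⟨i, hi, hpi⟩ := mem_iUnion₂.1 hp
        have h1 : p.2 ∈ B i := hpi.2.2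
        have h2 : p.2 ∉ ⋃ j ∈ Finset.range N, B j := hpG.2.2
        exact h2 (mem_biUnion hi h1)
      have hpairdisj : Set.Pairwise (↑(Finset.range N))
          (Function.onFun Disjoint fun i => (Set.univ ×ˢ (A i) : Set (U × ℝ))) := by
        intro i _ j _ hij
        simp only [Function.onFun]
        rw [Set.disjoint_left]
        intro p hpi hpj
        exact Set.disjoint_left.1 (hBdisj hij) hpi.2.2 hpj.2.2
      have hintUnion : IntegrableOn (fun p : U × ℝ => f (Y p.2, p.1))
          (⋃ i ∈ Finset.range N, Set.univ ×ˢ (A i)) ν := by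
        apply (hintF D hD subset_rfl).mono_set
        rw [hDeq]
        exact subset_union_left
      have hsplit1 : (∫ p in Set.univ ×ˢ D, f (Y p.2, p.1) ∂ν)
          = (∑ i ∈ Finset.range N, ∫ p in Set.univ ×ˢ (A i), f (Y p.2, p.1) ∂ν)
            + ∫ p in Set.univ ×ˢ (G N), f (Y p.2, p.1) ∂ν := by
        rw [hDeq, setIntegral_union hdisjUG (MeasurableSet.univ.prod (hGmeas N)) hintUnion
          (hintF (G N) (hGmeas N) diff_subset),
          integral_biUnion_finset _ (fun i _ => MeasurableSet.univ.prod (hAmeas i)) hpairdisj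
          (fun i _ => hintF (A i) (hAmeas i) (hAsub i))]
      -- per-piece estimates
      have hpiece : ∀ i ∈ Finset.range N,
          |(∫ p in Set.univ ×ˢ (A i), f (Y p.2, p.1) ∂ν)
            - ∫ p in Set.univ ×ˢ (A i), f (s i, p.1) ∂ν|
          ≤ (K:ℝ) * δ * (volume (A i)).toReal := by
        intro i _
        rw [← integral_sub (hintF (A i) (hAmeas i) (hAsub i)) (hintc i), ← Real.norm_eq_abs]
        have hfin : ν (Set.univ ×ˢ (A i)) < ⊤ := by
          rw [YM.mass hν (hAmeas i) ((hAsub i).trans hDT)]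
          exact lt_of_le_of_lt (measure_mono (hAsub i)) hvolD
        have := norm_setIntegral_le_of_norm_le_const (μ := ν) hfin
          (f := fun p : U × ℝ => f (Y p.2, p.1) - f (s i, p.1)) (C := (K:ℝ) * δ) ?_
        · rw [Measure.real, YM.mass hν (hAmeas i) ((hAsub i).trans hDT)] at this
          exact this
        · intro p hp
          have hp2 : p.2 ∈ A i := hp.2
          have hball : Y p.2 ∈ Metric.ball (s i) δ := hBsub i hp2.2
          have hdist : dist (Y p.2) (s i) < δ := Metric.mem_ball.1 hball
          have hle := hf.dist_le_mul (Y p.2, p.1) (s i, p.1)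
          rw [Real.dist_eq] at hle
          rw [Real.norm_eq_abs]
          refine hle.trans ?_
          have heq : dist ((Y p.2, p.1) : S × U) (s i, p.1) = dist (Y p.2) (s i) := by
            rw [Prod.dist_eq]; simp [max_eq_left dist_nonneg]
          rw [heq]
          exact mul_le_mul_of_nonneg_left (le_of_lt hdist) K.coe_nonneg
      -- tail estimate
      have htail : |∫ p in Set.univ ×ˢ (G N), f (Y p.2, p.1) ∂ν|
          ≤ M * (volume (G N)).toReal := by
        rw [← Real.norm_eq_abs]
        have hfin : ν (Set.univ ×ˢ (G N)) < ⊤ := by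
          rw [YM.mass hν (hGmeas N) (diff_subset.trans hDT)]
          exact lt_of_le_of_lt (measure_mono diff_subset) hvolD
        have := norm_setIntegral_le_of_norm_le_const (μ := ν) hfin
          (f := fun p : U × ℝ => f (Y p.2, p.1)) (C := M)
          (fun p _ => by rw [Real.norm_eq_abs]; exact hM _)
        rwa [Measure.real, YM.mass hν (hGmeas N) (diff_subset.trans hDT)] at this
      -- sum of volumes bound
      have hsumvol : ∑ i ∈ Finset.range N, (volume (A i)).toReal ≤ vD := by
        have h1 : ∑ i ∈ Finset.range N, volume (A i) = volume (⋃ i ∈ Finset.range N, A i) := by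
          rw [measure_biUnion_finset ?_ (fun i _ => hAmeas i)]
          intro i _ j _ hij
          simp only [Function.onFun]
          exact Set.disjoint_left.2 fun t hti htj =>
            Set.disjoint_left.1 (hBdisj hij) hti.2 htj.2
        have h2 : volume (⋃ i ∈ Finset.range N, A i) ≤ volume D :=
          measure_mono (iUnion₂_subset fun i _ => hAsub i)
        have h3 : ∀ i ∈ Finset.range N, volume (A i) ≠ ⊤ := fun i _ =>
          ne_of_lt (lt_of_le_of_lt (measure_mono (hAsub i)) hvolD)
        calc ∑ i ∈ Finset.range N, (volume (A i)).toReal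
            = (∑ i ∈ Finset.range N, volume (A i)).toReal := (ENNReal.toReal_sum h3).symm
          _ = (volume (⋃ i ∈ Finset.range N, A i)).toReal := by rw [h1]
          _ ≤ vD := ENNReal.toReal_mono (ne_of_lt hvolD) h2
      -- assemble the estimate
      rw [hsplit1]
      have hre : (∑ i ∈ Finset.range N, ∫ p in Set.univ ×ˢ (A i), f (Y p.2, p.1) ∂ν)
          + (∫ p in Set.univ ×ˢ (G N), f (Y p.2, p.1) ∂ν)
          - ∑ i ∈ Finset.range N, ∫ p in Set.univ ×ˢ (A i), f (s i, p.1) ∂ν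
          = (∑ i ∈ Finset.range N, ((∫ p in Set.univ ×ˢ (A i), f (Y p.2, p.1) ∂ν)
              - ∫ p in Set.univ ×ˢ (A i), f (s i, p.1) ∂ν))
            + ∫ p in Set.univ ×ˢ (G N), f (Y p.2, p.1) ∂ν := by
        rw [Finset.sum_sub_distrib]; ring
      rw [hre]
      refine (abs_add_le _ _).trans ?_
      have h4 := Finset.abs_sum_le_sum_abs
        (fun i => (∫ p in Set.univ ×ˢ (A i), f (Y p.2, p.1) ∂ν)
          - ∫ p in Set.univ ×ˢ (A i), f (s i, p.1) ∂ν) (Finset.range N)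
      have h5 : ∑ i ∈ Finset.range N, |(∫ p in Set.univ ×ˢ (A i), f (Y p.2, p.1) ∂ν)
            - ∫ p in Set.univ ×ˢ (A i), f (s i, p.1) ∂ν|
          ≤ ∑ i ∈ Finset.range N, (K:ℝ) * δ * (volume (A i)).toReal :=
        Finset.sum_le_sum hpiece
      have h6 : ∑ i ∈ Finset.range N, (K:ℝ) * δ * (volume (A i)).toReal
          = (K:ℝ) * δ * ∑ i ∈ Finset.range N, (volume (A i)).toReal := by
        rw [Finset.mul_sum]
      have h7 : (K:ℝ) * δ * ∑ i ∈ Finset.range N, (volume (A i)).toReal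
          ≤ (K:ℝ) * δ * vD :=
        mul_le_mul_of_nonneg_left hsumvol
          (mul_nonneg K.coe_nonneg (le_of_lt hδpos))
      linarith
    -- convergence of the finite sums
    have hBCFcont : ∀ i : ℕ, Continuous (fun u => f (s i, u)) := fun i =>
      hf.continuous.comp (continuous_const.prodMk continuous_id)
    set F : ℕ → BoundedContinuousFunction U ℝ := fun i =>
      BoundedContinuousFunction.ofNormedAddCommGroup (fun u => f (s i, u)) (hBCFcont i) M
        (fun u => by rw [Real.norm_eq_abs]; exact hM _) with hFdef
    have hΦ : Tendsto
        (fun n => ∑ i ∈ Finset.range N, ∫ p in Set.univ ×ˢ (A i), f (s i, p.1) ∂(μs n))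
        atTop (nhds (∑ i ∈ Finset.range N, ∫ p in Set.univ ×ˢ (A i), f (s i, p.1) ∂μ)) := by
      apply tendsto_finset_sum
      intro i _
      have := hconv (A i) (hAmeas i) ((hAsub i).trans hDT) (F i)
      simpa [hFdef, BoundedContinuousFunction.coe_ofNormedAddCommGroup] using this
    rw [Metric.tendsto_atTop] at hΦ
    obtain ⟨N', hN'⟩ := hΦ (ε/4) (by linarith)
    refine ⟨N', fun n hn => ?_⟩
    have h1 := hsplit (μs n) (hμs n)
    have h2 := hsplit μ hμ
    have h3 := hN' n hn
    rw [Real.dist_eq] at h3 ⊢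
    have e1 := abs_sub_le (∫ p in Set.univ ×ˢ D, f (Y p.2, p.1) ∂(μs n))
      (∑ i ∈ Finset.range N, ∫ p in Set.univ ×ˢ (A i), f (s i, p.1) ∂(μs n))
      (∫ p in Set.univ ×ˢ D, f (Y p.2, p.1) ∂μ)
    have e2 := abs_sub_le
      (∑ i ∈ Finset.range N, ∫ p in Set.univ ×ˢ (A i), f (s i, p.1) ∂(μs n))
      (∑ i ∈ Finset.range N, ∫ p in Set.univ ×ˢ (A i), f (s i, p.1) ∂μ)
      (∫ p in Set.univ ×ˢ D, f (Y p.2, p.1) ∂μ)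
    have e3 := abs_sub_comm
      (∑ i ∈ Finset.range N, ∫ p in Set.univ ×ˢ (A i), f (s i, p.1) ∂μ)
      (∫ p in Set.univ ×ˢ D, f (Y p.2, p.1) ∂μ)
    rw [e3] at e2
    linarith
  -- part (a)
  have ha : Tendsto (fun n => (∫ p in Set.univ ×ˢ D, f (y n p.2, p.1) ∂(μs n))
      - ∫ p in Set.univ ×ˢ D, f (Y p.2, p.1) ∂(μs n)) atTop (nhds 0) := by
    haveI hIccfin : IsFiniteMeasure (volume.restrict D) := by
      constructor
      rw [Measure.restrict_apply_univ]
      exact lt_of_le_of_lt (measure_mono hDT) (by rw [Real.volume_Icc]; exact ofReal_lt_top)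
    set h : ℕ → ℝ → ℝ := fun n t => min (2*M) (K * dist (y n t) (Y t)) with hhdef
    have hhmeas : ∀ n, Measurable (h n) := fun n =>
      measurable_const.min (measurable_const.mul ((hymeas n).dist hYmeas))
    have hhabs : ∀ n t, |h n t| ≤ 2*M := by
      intro n t
      have h1 : (0:ℝ) ≤ K * dist (y n t) (Y t) := mul_nonneg K.coe_nonneg dist_nonneg
      have h2 : (0:ℝ) ≤ min (2*M) (K * dist (y n t) (Y t)) := le_min (by linarith) h1
      have h3 := min_le_left (2*M) ((K:ℝ) * dist (y n t) (Y t))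
      rw [hhdef, abs_of_nonneg h2]
      exact h3
    have hbound : ∀ n (p : U × ℝ), |f (y n p.2, p.1) - f (Y p.2, p.1)| ≤ h n p.2 := by
      intro n p
      refine le_min ?_ ?_
      · have h1 := abs_le.1 (hM (y n p.2, p.1))
        have h2 := abs_le.1 (hM (Y p.2, p.1))
        exact abs_le.2 ⟨by linarith [h1.1, h2.2], by linarith [h1.2, h2.1]⟩
      · have hle := hf.dist_le_mul (y n p.2, p.1) (Y p.2, p.1)
        rw [Real.dist_eq] at hle
        refine hle.trans ?_
        have : dist ((y n p.2, p.1) : S × U) (Y p.2, p.1) = dist (y n p.2) (Y p.2) := by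
          rw [Prod.dist_eq]
          simp [max_eq_left dist_nonneg]
        rw [this]
    apply squeeze_zero_norm (a := fun n => ∫ t in D, h n t)
    · intro n
      haveI := YM.finite (hμs n) hD
      have hint1 : IntegrableOn (fun p : U × ℝ => f (y n p.2, p.1)) (Set.univ ×ˢ D) (μs n) :=
        YM.integrable (hμs n) hD (hmeasyn n).aestronglyMeasurable (fun p => hM _)
      have hint2 : IntegrableOn (fun p : U × ℝ => f (Y p.2, p.1)) (Set.univ ×ˢ D) (μs n) :=
        YM.integrable (hμs n) hD hmeasY.aestronglyMeasurable (fun p => hM _)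
      rw [← integral_sub hint1 hint2, Real.norm_eq_abs]
      calc |∫ p in Set.univ ×ˢ D, (f (y n p.2, p.1) - f (Y p.2, p.1)) ∂(μs n)|
          ≤ ∫ p in Set.univ ×ˢ D, |f (y n p.2, p.1) - f (Y p.2, p.1)| ∂(μs n) :=
          by
            rw [← Real.norm_eq_abs]
            refine (norm_integral_le_integral_norm _).trans (le_of_eq ?_)
            simp [Real.norm_eq_abs]
        _ ≤ ∫ p in Set.univ ×ˢ D, h n p.2 ∂(μs n) := by
            refine integral_mono (hint1.sub hint2).abs ?_ (fun p => hbound n p)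
            exact YM.integrable (hμs n) hD
              (((hhmeas n).comp measurable_snd).aestronglyMeasurable) (fun p => hhabs n p.2)
        _ = ∫ t in D, h n t := YM.integral_snd (hμs n) hD hDT (hhmeas n)
    · have h0 : (0:ℝ) = ∫ t in D, (0:ℝ) := by simp
      rw [h0]
      apply tendsto_integral_of_dominated_convergence (bound := fun _ => 2*M)
      · exact fun n => (hhmeas n).aestronglyMeasurable
      · exact integrable_const _
      · intro n
        exact ae_of_all _ fun t => by rw [Real.norm_eq_abs]; exact hhabs n t
      · rw [ae_restrict_iff' hD]
        refine ae_of_all _ fun t ht => ?_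
        have hd : Tendsto (fun n => dist (y n t) (Y t)) atTop (nhds 0) := by
          have := (hyconv t (hDT ht)).dist (tendsto_const_nhds (α := ℕ) (x := Y t))
          simpa using this
        have : Tendsto (fun n => min (2*M) ((K:ℝ) * dist (y n t) (Y t))) atTop
            (nhds (min (2*M) ((K:ℝ) * 0))) :=
          tendsto_const_nhds.min (tendsto_const_nhds.mul hd)
        simpa [min_eq_right (by linarith : (0:ℝ) ≤ 2*M)] using this
  have := ha.add hb
  rw [zero_add] at this
  convert this using 2 with n
  ring

end Key

set_option maxHeartbeats 1000000 in
/-- Fiber Product Lemma: if measurable maps `y_n : [0,T] → S` converge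
pointwise on `[0,T]` to `y` and Young measures `μ_n` converge stably to `μ`, then the fiber
products `δ_{y_n} ⊗ μ_n` converge stably to `δ_y ⊗ μ` as Young measures on `S × U`. -/
theorem fiber_product_lemma
    (T : ℝ) (hT : 0 < T)
    (S U : Type*) [MetricSpace S] [TopologicalSpace.SeparableSpace S]
    [MetricSpace U] [TopologicalSpace.SeparableSpace U]
    [MeasurableSpace S] [BorelSpace S] [MeasurableSpace U] [BorelSpace U]
    (y : ℕ → ℝ → S) (hymeas : ∀ n, Measurable (y n)) (ylim : ℝ → S)
    (hyconv : ∀ t ∈ Set.Icc (0:ℝ) T,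
      Filter.Tendsto (fun n => y n t) Filter.atTop (nhds (ylim t)))
    (μs : ℕ → Measure (U × ℝ)) (μ : Measure (U × ℝ))
    (hμs : ∀ n, IsYoungMeasure T (μs n)) (hμ : IsYoungMeasure T μ)
    (hconv : StablyTendsTo T μs μ) :
    ∀ D : Set ℝ, MeasurableSet D → D ⊆ Set.Icc 0 T →
      ∀ g : S × U → ℝ, Continuous g → (∃ M : ℝ, ∀ p, |g p| ≤ M) →
        Filter.Tendsto
          (fun n => ∫ p in Set.univ ×ˢ D, g (y n p.2, p.1) ∂(μs n)) Filter.atTop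
          (nhds (∫ p in Set.univ ×ˢ D, g (ylim p.2, p.1) ∂μ)) := by
  classical
  intro D hD hDT g hg hgbdd
  obtain ⟨M, hM⟩ := hgbdd
  -- `U` is nonempty, since the Young measure `μ` has positive total mass
  rcases isEmpty_or_nonempty U with hU | hU
  · exfalso
    have h1 := hμ Set.univ MeasurableSet.univ
    have h2 : (Set.univ ×ˢ Set.univ : Set (U × ℝ)) = ∅ := by
      simp [Set.eq_empty_of_isEmpty]
    rw [h2, measure_empty, Set.univ_inter, Real.volume_Icc] at h1
    have h3 : (0:ℝ≥0∞) < ENNReal.ofReal (T - 0) := ENNReal.ofReal_pos.2 (by linarith)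
    rw [← h1] at h3
    exact lt_irrefl _ h3
  haveI : Nonempty S := ⟨y 0 0⟩
  haveI : SecondCountableTopology S := UniformSpace.secondCountable_of_separable S
  haveI : SecondCountableTopology U := UniformSpace.secondCountable_of_separable U
  have hM0 : 0 ≤ M := (abs_nonneg _).trans (hM (Classical.arbitrary _))
  -- replace `ylim` by a globally measurable modification `Y`
  set Y : ℝ → S := fun t => if t ∈ Set.Icc (0:ℝ) T then ylim t else y 0 t with hYdef
  have hYmeas : Measurable Y := by
    apply measurable_of_tendsto_metrizable
      (f := fun n t => if t ∈ Set.Icc (0:ℝ) T then y n t else y 0 t)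
    · intro n
      exact Measurable.ite measurableSet_Icc (hymeas n) (hymeas 0)
    · rw [tendsto_pi_nhds]
      intro t
      by_cases ht : t ∈ Set.Icc (0:ℝ) T
      · rw [hYdef]
        simp only [if_pos ht]
        exact hyconv t ht
      · rw [hYdef]
        simp only [if_neg ht]
        exact tendsto_const_nhds
  have hYconv : ∀ t ∈ Set.Icc (0:ℝ) T, Tendsto (fun n => y n t) atTop (nhds (Y t)) := by
    intro t ht
    rw [hYdef]
    simp only [ht, if_true]
    exact hyconv t ht
  have hYeq : ∫ p in Set.univ ×ˢ D, g (ylim p.2, p.1) ∂μ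
      = ∫ p in Set.univ ×ˢ D, g (Y p.2, p.1) ∂μ := by
    apply setIntegral_congr_fun (MeasurableSet.univ.prod hD)
    intro p hp
    have hpt : p.2 ∈ Set.Icc (0:ℝ) T := hDT hp.2
    rw [hYdef]
    simp [hpt]
  rw [hYeq]
  -- Lipschitz approximations from below and above
  set glo : ℕ → S × U → ℝ := fun k => infConv g k with hglodef
  set ghi : ℕ → S × U → ℝ := fun k p => - infConv (fun q => - g q) k p with hghidef
  have hMneg : ∀ p : S × U, |-(g p)| ≤ M := fun p => by rw [abs_neg]; exact hM p
  have hglole : ∀ k p, glo k p ≤ g p := fun k p => infConv_le hM k p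
  have hghige : ∀ k p, g p ≤ ghi k p := fun k p => by
    have h1 : infConv (fun q => - g q) k p ≤ - g p := infConv_le hMneg k p
    rw [hghidef]
    simp only
    linarith
  have hgloabs : ∀ k p, |glo k p| ≤ M := fun k p => abs_infConv_le hM k p
  have hghiabs : ∀ k p, |ghi k p| ≤ M := fun k p => by
    rw [hghidef]
    simp only [abs_neg]
    exact abs_infConv_le hMneg k p
  have hglolip : ∀ k : ℕ, LipschitzWith (k : ℝ≥0) (glo k) := fun k => infConv_lipschitz hM k
  have hghilip : ∀ k : ℕ, LipschitzWith (k : ℝ≥0) (ghi k) := fun k => by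
    have h1 := infConv_lipschitz hMneg k
    apply LipschitzWith.of_dist_le_mul
    intro p q
    rw [hghidef]
    simp only [dist_neg_neg]
    exact h1.dist_le_mul p q
  have hglotend : ∀ p, Tendsto (fun k => glo k p) atTop (nhds (g p)) := fun p =>
    tendsto_infConv hM hg p
  have hghitend : ∀ p, Tendsto (fun k => ghi k p) atTop (nhds (g p)) := fun p => by
    have h1 := (tendsto_infConv hMneg (hg.neg) p).neg
    rw [neg_neg] at h1
    exact h1
  -- measurability
  have hmeasglo : ∀ k, Measurable fun p : U × ℝ => glo k (Y p.2, p.1) := fun k =>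
    (hglolip k).continuous.measurable.comp ((hYmeas.comp measurable_snd).prodMk measurable_fst)
  have hmeasghi : ∀ k, Measurable fun p : U × ℝ => ghi k (Y p.2, p.1) := fun k =>
    (hghilip k).continuous.measurable.comp ((hYmeas.comp measurable_snd).prodMk measurable_fst)
  -- limits in `k` via dominated convergence
  haveI hμfin := YM.finite hμ hD
  have hAlo : Tendsto (fun k => ∫ p in Set.univ ×ˢ D, glo k (Y p.2, p.1) ∂μ) atTop
      (nhds (∫ p in Set.univ ×ˢ D, g (Y p.2, p.1) ∂μ)) := by
    apply tendsto_integral_of_dominated_convergence (bound := fun _ => M)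
    · exact fun k => (hmeasglo k).aestronglyMeasurable
    · exact integrable_const _
    · exact fun k => ae_of_all _ fun p => by rw [Real.norm_eq_abs]; exact hgloabs k _
    · exact ae_of_all _ fun p => hglotend (Y p.2, p.1)
  have hAhi : Tendsto (fun k => ∫ p in Set.univ ×ˢ D, ghi k (Y p.2, p.1) ∂μ) atTop
      (nhds (∫ p in Set.univ ×ˢ D, g (Y p.2, p.1) ∂μ)) := by
    apply tendsto_integral_of_dominated_convergence (bound := fun _ => M)
    · exact fun k => (hmeasghi k).aestronglyMeasurable
    · exact integrable_const _
    · exact fun k => ae_of_all _ fun p => by rw [Real.norm_eq_abs]; exact hghiabs k _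
    · exact ae_of_all _ fun p => hghitend (Y p.2, p.1)
  -- convergence in `n` for each fixed `k`, by the Lipschitz case
  have hlok : ∀ k, Tendsto (fun n => ∫ p in Set.univ ×ˢ D, glo k (y n p.2, p.1) ∂(μs n)) atTop
      (nhds (∫ p in Set.univ ×ˢ D, glo k (Y p.2, p.1) ∂μ)) := fun k =>
    key_lipschitz y hymeas Y hYmeas hYconv μs μ hμs hμ hconv D hD hDT
      (glo k) _ (hglolip k) M (hgloabs k)
  have hhik : ∀ k, Tendsto (fun n => ∫ p in Set.univ ×ˢ D, ghi k (y n p.2, p.1) ∂(μs n)) atTop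
      (nhds (∫ p in Set.univ ×ˢ D, ghi k (Y p.2, p.1) ∂μ)) := fun k =>
    key_lipschitz y hymeas Y hYmeas hYconv μs μ hμs hμ hconv D hD hDT
      (ghi k) _ (hghilip k) M (hghiabs k)
  -- monotonicity
  have hmono : ∀ n k,
      (∫ p in Set.univ ×ˢ D, glo k (y n p.2, p.1) ∂(μs n))
        ≤ (∫ p in Set.univ ×ˢ D, g (y n p.2, p.1) ∂(μs n))
      ∧ (∫ p in Set.univ ×ˢ D, g (y n p.2, p.1) ∂(μs n))
        ≤ (∫ p in Set.univ ×ˢ D, ghi k (y n p.2, p.1) ∂(μs n)) := by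
    intro n k
    haveI := YM.finite (hμs n) hD
    have hmeasmapn : Measurable fun p : U × ℝ => ((y n p.2, p.1) : S × U) :=
      ((hymeas n).comp measurable_snd).prodMk measurable_fst
    have hint1 : IntegrableOn (fun p : U × ℝ => glo k (y n p.2, p.1)) (Set.univ ×ˢ D) (μs n) :=
      YM.integrable (hμs n) hD
        ((hglolip k).continuous.measurable.comp hmeasmapn).aestronglyMeasurable
        (fun p => hgloabs k _)
    have hint2 : IntegrableOn (fun p : U × ℝ => ghi k (y n p.2, p.1)) (Set.univ ×ˢ D) (μs n) :=
      YM.integrable (hμs n) hD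
        ((hghilip k).continuous.measurable.comp hmeasmapn).aestronglyMeasurable
        (fun p => hghiabs k _)
    have hintg : IntegrableOn (fun p : U × ℝ => g (y n p.2, p.1)) (Set.univ ×ˢ D) (μs n) :=
      YM.integrable (hμs n) hD
        (hg.measurable.comp hmeasmapn).aestronglyMeasurable (fun p => hM _)
    exact ⟨integral_mono hint1 hintg (fun p => hglole k _),
      integral_mono hintg hint2 (fun p => hghige k _)⟩
  -- conclusion
  rw [Metric.tendsto_atTop]
  intro ε hε
  obtain ⟨k1, hk1⟩ := (Metric.tendsto_atTop.1 hAlo) (ε/2) (by linarith)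
  obtain ⟨k2, hk2⟩ := (Metric.tendsto_atTop.1 hAhi) (ε/2) (by linarith)
  set k := max k1 k2 with hkdef
  have hk1' := hk1 k (le_max_left _ _)
  have hk2' := hk2 k (le_max_right _ _)
  obtain ⟨N1, hN1⟩ := (Metric.tendsto_atTop.1 (hlok k)) (ε/2) (by linarith)
  obtain ⟨N2, hN2⟩ := (Metric.tendsto_atTop.1 (hhik k)) (ε/2) (by linarith)
  refine ⟨max N1 N2, fun n hn => ?_⟩
  have e1 := hN1 n (le_trans (le_max_left _ _) hn)
  have e2 := hN2 n (le_trans (le_max_right _ _) hn)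
  obtain ⟨m1, m2⟩ := hmono n k
  rw [Real.dist_eq] at e1 e2 hk1' hk2' ⊢
  have f1 := abs_lt.1 e1
  have f2 := abs_lt.1 e2
  have f3 := abs_lt.1 hk1'
  have f4 := abs_lt.1 hk2'
  rw [abs_lt]
  constructor <;> [linarith [f1.1, f3.1, m1]; linarith [f2.2, f4.2, m2]]
end

section
/- Let T > 0, let (Ω,ℱ,P) be a probability space, let U be a metrizable Suslin space, and let ϑ : [0,T] × U → [0,∞] be a measurable function such that ϑ(t,·) is lower semicontinuous for every t ∈ [0,T]. Let μ_n, μ : Ω → (Young measures on U over [0,T]) be maps such that ω ↦ μ_n(ω)(J) and ω ↦ μ(ω)(J) are measurable for every Borel set J ⊆ U × [0,T], and suppose that for P-a.e. ω ∈ Ω, μ_n(ω) converges stably to μ(ω). Then E[∫_{U×[0,T]} ϑ(t,u) μ(du,dt)] ≤ liminf_{n→∞} E[∫_{U×[0,T]} ϑ(t,u) μ_n(du,dt)]; in particular, if sup_n E[∫_{U×[0,T]} ϑ(t,u) μ_n(du,dt)] ≤ R for some R ≥ 0, then E[∫_{U×[0,T]} ϑ(t,u) μ(du,dt)] ≤ R.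 -/
open MeasureTheory Set Filter Topology ENNReal NNReal

set_option maxHeartbeats 1000000



/-- Inner approximation of an analytic set by closed subsets (Choquet capacitability, for the
outer measure of a finite Borel measure on a metric space). -/
lemma analyticSet_exists_isClosed_subset {X : Type*} [MetricSpace X] [MeasurableSpace X]
    [OpensMeasurableSpace X] (μ : Measure X) [IsFiniteMeasure μ] {A : Set X}
    (hA : MeasureTheory.AnalyticSet A) {ε : ℝ≥0∞} (hε : ε ≠ 0) :
    ∃ K, IsClosed K ∧ K ⊆ A ∧ μ A ≤ μ K + ε := by
  rw [MeasureTheory.AnalyticSet_def] at hA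
  rcases hA with rfl | ⟨f, hf, hfr⟩
  · exact ⟨∅, isClosed_empty, Subset.rfl, by simp⟩
  obtain ⟨δ, hδpos, hδsum⟩ := ENNReal.exists_pos_sum_of_countable' hε ℕ
  -- the "cylinders"
  set Mset : (ℕ → ℕ) → ℕ → Set (ℕ → ℕ) := fun τ k => {x | ∀ i < k, x i ≤ τ i} with hMdef
  -- choice of a bound at each step
  have key : ∀ (τ : ℕ → ℕ) (k : ℕ), ∃ N : ℕ,
      μ (f '' Mset τ k) ≤ μ (f '' (Mset τ k ∩ {x | x k ≤ N})) + δ k := by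
    intro τ k
    have hdir : Directed (· ⊆ ·) (fun N : ℕ => f '' (Mset τ k ∩ {x | x k ≤ N})) := by
      intro a b
      have h1 : {x : ℕ → ℕ | x k ≤ a} ⊆ {x : ℕ → ℕ | x k ≤ max a b} := by
        intro x hx
        simp only [mem_setOf_eq] at hx ⊢
        exact le_trans hx (le_max_left _ _)
      have h2 : {x : ℕ → ℕ | x k ≤ b} ⊆ {x : ℕ → ℕ | x k ≤ max a b} := by
        intro x hx
        simp only [mem_setOf_eq] at hx ⊢
        exact le_trans hx (le_max_right _ _)
      exact ⟨max a b, image_mono (inter_subset_inter_right _ h1),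
        image_mono (inter_subset_inter_right _ h2)⟩
    have hun0 : Mset τ k = ⋃ N : ℕ, (Mset τ k ∩ {x | x k ≤ N}) := by
      ext x
      simp only [mem_iUnion, mem_inter_iff, mem_setOf_eq]
      exact ⟨fun h => ⟨x k, h, le_refl _⟩, fun ⟨N, h1, _⟩ => h1⟩
    have hsup := hdir.measure_iUnion (μ := μ)
    rw [← image_iUnion, ← hun0] at hsup
    by_cases h0 : μ (f '' Mset τ k) = 0
    · exact ⟨0, by simp [h0]⟩
    have hlt : μ (f '' Mset τ k) - δ k < μ (f '' Mset τ k) :=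
      ENNReal.sub_lt_self (measure_ne_top _ _) h0 (hδpos k).ne'
    obtain ⟨N, hN⟩ := lt_iSup_iff.mp (hlt.trans_eq hsup)
    exact ⟨N, tsub_le_iff_right.mp hN.le⟩
  choose pick hpick using key
  -- recursive construction of σ via its prefixes
  let p : ℕ → (ℕ → ℕ) := fun k =>
    Nat.rec (fun _ => 0) (fun k pk => Function.update pk k (pick pk k)) k
  set σ : ℕ → ℕ := fun k => p (k + 1) k with hσdef
  have hp_succ : ∀ k, p (k + 1) = Function.update (p k) k (pick (p k) k) := fun k => rfl
  have hagree : ∀ k i, i < k → p k i = σ i := by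
    intro k
    induction k with
    | zero => intro i hi; omega
    | succ k ih =>
      intro i hi
      rcases Nat.lt_succ_iff_lt_or_eq.mp hi with hi' | rfl
      · rw [hp_succ, Function.update_of_ne (by omega : i ≠ k), ih i hi']
      · rfl
  have hMeq : ∀ k, Mset σ k = Mset (p k) k := by
    intro k
    ext x
    simp only [hMdef, mem_setOf_eq]
    exact ⟨fun h i hi => by rw [hagree k i hi]; exact h i hi,
      fun h i hi => by rw [← hagree k i hi]; exact h i hi⟩
  have hσk : ∀ k, σ k = pick (p k) k := by
    intro k
    show p (k + 1) k = _
    rw [hp_succ, Function.update_self]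
  have hMsucc : ∀ k, Mset σ (k + 1) = Mset (p k) k ∩ {x | x k ≤ pick (p k) k} := by
    intro k
    ext x
    simp only [hMdef, mem_setOf_eq, mem_inter_iff]
    constructor
    · intro h
      refine ⟨fun i hi => by rw [hagree k i hi]; exact h i (by omega), ?_⟩
      have := h k (by omega)
      rwa [hσk k] at this
    · rintro ⟨h1, h2⟩ i hi
      rcases Nat.lt_succ_iff_lt_or_eq.mp hi with hi' | rfl
      · rw [← hagree k i hi']
        exact h1 i hi'
      · rw [hσk]
        exact h2
  -- invariant
  have hinv : ∀ k, μ A ≤ μ (f '' Mset σ k) + ∑ i ∈ Finset.range k, δ i := by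
    intro k
    induction k with
    | zero =>
      have : Mset σ 0 = univ := by ext x; simp [hMdef]
      rw [this, image_univ, hfr]
      simp
    | succ k ih =>
      refine ih.trans ?_
      have step := hpick (p k) k
      rw [← hMsucc, ← hMeq] at step
      calc μ (f '' Mset σ k) + ∑ i ∈ Finset.range k, δ i
          ≤ (μ (f '' Mset σ (k + 1)) + δ k) + ∑ i ∈ Finset.range k, δ i :=
            add_le_add_left step _
        _ = μ (f '' Mset σ (k + 1)) + ∑ i ∈ Finset.range (k + 1), δ i := by
            rw [Finset.sum_range_succ]; ring
  have hsum_le : ∀ k, ∑ i ∈ Finset.range k, δ i ≤ ε :=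
    fun k => le_trans (ENNReal.sum_le_tsum _) hδsum.le
  have hinv' : ∀ k, μ A ≤ μ (closure (f '' Mset σ k)) + ε := fun k =>
    (hinv k).trans (add_le_add (measure_mono subset_closure) (hsum_le k))
  -- the closed set
  refine ⟨⋂ k, closure (f '' Mset σ k), isClosed_iInter fun k => isClosed_closure, ?_, ?_⟩
  · -- diagonal argument : the intersection is inside the range of f
    rw [← hfr]
    intro y hy
    have hy' : ∀ k : ℕ, ∃ x, x ∈ Mset σ k ∧ dist y (f x) < 1 / (k + 1) := by
      intro k
      have h1 := mem_iInter.mp hy k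
      rw [Metric.mem_closure_iff] at h1
      rcases h1 (1 / (k + 1)) (by positivity) with ⟨b, ⟨x, hx, rfl⟩, hb⟩
      exact ⟨x, hx, hb⟩
    choose x hxM hxd using hy'
    set z : ℕ → (ℕ → ℕ) := fun k i => if i < k then x k i else 0 with hzdef
    have hzC : ∀ k, z k ∈ univ.pi (fun i => Iic (σ i)) := by
      intro k
      rw [mem_univ_pi]
      intro i
      simp only [hzdef, mem_Iic]
      split
      · exact hxM k i ‹i < k›
      · exact Nat.zero_le _
    have hC : IsCompact (univ.pi fun i : ℕ => Iic (σ i)) :=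
      isCompact_univ_pi fun i => (Set.finite_Iic _).isCompact
    obtain ⟨w, -, φ, hφ, hzw⟩ := hC.tendsto_subseq hzC
    have hxw : Tendsto (fun k => x (φ k)) atTop (𝓝 w) := by
      rw [tendsto_pi_nhds] at hzw ⊢
      intro i
      have h1 := hzw i
      rw [nhds_discrete, tendsto_pure] at h1 ⊢
      have h2 : ∀ᶠ k : ℕ in atTop, i < φ k :=
        (hφ.tendsto_atTop).eventually_gt_atTop i
      filter_upwards [h1, h2] with k hk1 hk2
      rw [← hk1]
      simp only [Function.comp_apply, hzdef, if_pos hk2]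
    have h3 : Tendsto (fun k => f (x (φ k))) atTop (𝓝 (f w)) := (hf.tendsto w).comp hxw
    have h4 : Tendsto (fun k => f (x k)) atTop (𝓝 y) := by
      rw [tendsto_iff_dist_tendsto_zero]
      refine squeeze_zero (fun k => dist_nonneg) (fun k => (dist_comm (f (x k)) y ▸ (hxd k).le))
        tendsto_one_div_add_atTop_nhds_zero_nat
    have h5 : Tendsto (fun k => f (x (φ k))) atTop (𝓝 y) := h4.comp hφ.tendsto_atTop
    have : f w = y := tendsto_nhds_unique h3 h5
    exact ⟨w, this⟩
  · -- measure bound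
    have hdir : Directed (· ⊇ ·) (fun k => closure (f '' Mset σ k)) := by
      intro a b
      refine ⟨max a b, closure_mono (image_mono fun x hx i hi => hx i (lt_of_lt_of_le hi (le_max_left _ _))),
        closure_mono (image_mono fun x hx i hi => hx i (lt_of_lt_of_le hi (le_max_right _ _)))⟩
    have hiInf := Directed.measure_iInter (μ := μ)
      (fun k => (isClosed_closure (s := f '' Mset σ k)).measurableSet.nullMeasurableSet)
      hdir ⟨0, measure_ne_top _ _⟩
    rw [hiInf]
    calc μ A ≤ ⨅ k, (μ (closure (f '' Mset σ k)) + ε) := le_iInf hinv'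
      _ = (⨅ k, μ (closure (f '' Mset σ k))) + ε := by rw [iInf_add]

/-- Analytic sets are null-measurable for every finite Borel measure. -/
lemma AnalyticSet.nullMeasurableSet' {X : Type*} [MetricSpace X] [MeasurableSpace X]
    [OpensMeasurableSpace X] (μ : Measure X) [IsFiniteMeasure μ] {A : Set X}
    (hA : MeasureTheory.AnalyticSet A) : NullMeasurableSet A μ := by
  have h : ∀ n : ℕ, ∃ K, IsClosed K ∧ K ⊆ A ∧ μ A ≤ μ K + (n : ℝ≥0∞)⁻¹ := fun n =>
    analyticSet_exists_isClosed_subset μ hA (ENNReal.inv_ne_zero.mpr (ENNReal.natCast_ne_top n))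
  choose K hKc hKA hKb using h
  set E : Set X := ⋃ n, K n with hE
  have hEmeas : MeasurableSet E := MeasurableSet.iUnion fun n => (hKc n).measurableSet
  have hEA : E ⊆ A := iUnion_subset hKA
  have hAE : μ A ≤ μ E := by
    by_contra hcon
    push_neg at hcon
    have hδ : μ A - μ E ≠ 0 := by
      simp only [ne_eq, tsub_eq_zero_iff_le, not_le]
      exact hcon
    obtain ⟨n, hn⟩ := ENNReal.exists_inv_nat_lt hδ
    have h1 : μ A ≤ μ E + (n : ℝ≥0∞)⁻¹ := (hKb n).trans (add_le_add_left (measure_mono (subset_iUnion K n)) _)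
    have h2 : μ E + (n : ℝ≥0∞)⁻¹ < μ E + (μ A - μ E) :=
      ENNReal.add_lt_add_left (measure_ne_top _ _) hn
    rw [add_tsub_cancel_of_le hcon.le] at h2
    exact absurd (h1.trans_lt h2) (lt_irrefl _)
  have hnull : μ (A \ E) = 0 := by
    have := measure_inter_add_diff (μ := μ) A hEmeas
    rw [inter_eq_self_of_subset_right hEA] at this
    have h2 : μ E + μ (A \ E) ≤ μ E + 0 := by
      rw [this, add_zero]; exact hAE
    simpa using (ENNReal.add_le_add_iff_left (measure_ne_top μ E)).mp h2
  have : A = E ∪ (A \ E) := (union_diff_cancel hEA).symm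
  rw [this]
  exact hEmeas.nullMeasurableSet.union (NullMeasurableSet.of_null hnull)

/-- A Young measure on `U` over `[0,T]`. -/

lemma isYoungMeasure_isFiniteMeasure {U : Type*} [MeasurableSpace U] {T : ℝ}
    {μ : Measure (U × ℝ)} (h : IsYoungMeasure T μ) : IsFiniteMeasure μ := by
  constructor
  rw [← Set.univ_prod_univ, h univ MeasurableSet.univ]
  simp only [Set.univ_inter]
  exact measure_Icc_lt_top

section L2

variable {U : Type*} [MetricSpace U] [MeasurableSpace U] [BorelSpace U]

/-- Portmanteau-type inequality for open rectangles under stable convergence. -/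
lemma stable_rect {T : ℝ} {νs : ℕ → Measure (U × ℝ)} {ν : Measure (U × ℝ)}
    (hyn : ∀ n, IsYoungMeasure T (νs n)) (hy : IsYoungMeasure T ν)
    (hst : StablyTendsTo T νs ν) {G : Set U} (hG : IsOpen G) {E : Set ℝ}
    (hE : MeasurableSet E) (hE' : E ⊆ Set.Icc 0 T) :
    ν (G ×ˢ E) ≤ liminf (fun n => νs n (G ×ˢ E)) atTop := by
  haveI : IsFiniteMeasure ν := isYoungMeasure_isFiniteMeasure hy
  by_cases hGc : Gᶜ = ∅
  · -- G = univ
    have hGuniv : G = univ := by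
      rw [← compl_empty_iff, hGc]
    subst hGuniv
    have hconst : ∀ n, νs n ((univ : Set U) ×ˢ E) = ν ((univ : Set U) ×ˢ E) := by
      intro n
      rw [hyn n E hE, hy E hE]
    simp only [hconst]
    rw [liminf_const]
  · have hGcne : (Gᶜ).Nonempty := nonempty_iff_ne_empty.mpr hGc
    have hGcclosed : IsClosed Gᶜ := hG.isClosed_compl
    -- the approximating bounded continuous functions
    set g : ℕ → U → ℝ := fun m u => min 1 ((m + 1) * Metric.infDist u Gᶜ) with hgdef
    have hg0 : ∀ m u, 0 ≤ g m u := fun m u =>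
      le_min zero_le_one (mul_nonneg (by positivity) Metric.infDist_nonneg)
    have hg1 : ∀ m u, g m u ≤ 1 := fun m u => min_le_left _ _
    have hgcont : ∀ m, Continuous (g m) := fun m =>
      continuous_const.min (continuous_const.mul (Metric.continuous_infDist_pt _))
    set fm : ℕ → BoundedContinuousFunction U ℝ := fun m =>
      BoundedContinuousFunction.mkOfBound ⟨g m, hgcont m⟩ 2 (by
        intro x y
        simp only [ContinuousMap.coe_mk]
        rw [Real.dist_eq, abs_sub_le_iff]
        constructor
        · linarith [hg1 m x, hg0 m y]
        · linarith [hg1 m y, hg0 m x]) with hfm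
    -- pointwise sup is the indicator of G
    have hsup : ∀ u : U, (⨆ m : ℕ, ENNReal.ofReal (g m u)) = (G ×ˢ (univ : Set ℝ)).indicator
        (fun _ => (1 : ℝ≥0∞)) ((u, (0:ℝ)) : U × ℝ) := by
      intro u
      by_cases hu : u ∈ G
      · have hd : 0 < Metric.infDist u Gᶜ :=
          (hGcclosed.notMem_iff_infDist_pos hGcne).mp (by simpa using hu)
        have : ∃ m : ℕ, 1 ≤ (m + 1 : ℝ) * Metric.infDist u Gᶜ := by
          obtain ⟨m, hm⟩ := exists_nat_ge (1 / Metric.infDist u Gᶜ)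
          refine ⟨m, ?_⟩
          rw [div_le_iff₀ hd] at hm
          nlinarith [hd]
        obtain ⟨m, hm⟩ := this
        have h1 : g m u = 1 := min_eq_left hm
        apply le_antisymm
        · refine iSup_le fun k => ?_
          have := hg1 k u
          simp only [indicator_of_mem (by simp [hu] : ((u,(0:ℝ)) : U × ℝ) ∈ G ×ˢ (univ : Set ℝ))]
          exact ENNReal.ofReal_le_one.mpr (hg1 k u)
        · simp only [indicator_of_mem (by simp [hu] : ((u,(0:ℝ)) : U × ℝ) ∈ G ×ˢ (univ : Set ℝ))]
          refine le_iSup_of_le m ?_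
          rw [h1]
          simp
      · have hd : Metric.infDist u Gᶜ = 0 := Metric.infDist_zero_of_mem (by simpa using hu)
        have : ∀ m : ℕ, g m u = 0 := by
          intro m
          simp [hgdef, hd]
        simp only [this, ENNReal.ofReal_zero, iSup_const]
        rw [indicator_of_notMem (by simp [hu])]
    -- the lintegral quantities
    set L : Measure (U × ℝ) → ℕ → ℝ≥0∞ :=
      fun ρ m => ∫⁻ p in univ ×ˢ E, ENNReal.ofReal (g m p.1) ∂ρ with hL
    have hmg : ∀ m, Measurable fun p : U × ℝ => ENNReal.ofReal (g m p.1) := fun m =>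
      ENNReal.measurable_ofReal.comp ((hgcont m).comp continuous_fst).measurable
    have hGE : MeasurableSet (G ×ˢ E) := hG.measurableSet.prod hE
    have hindic : ∀ ρ : Measure (U × ℝ),
        ∫⁻ p in univ ×ˢ E, (G ×ˢ (univ : Set ℝ)).indicator (fun _ => (1 : ℝ≥0∞)) p ∂ρ
          = ρ (G ×ˢ E) := by
      intro ρ
      have h1 : (fun _ : U × ℝ => (1 : ℝ≥0∞)) = 1 := rfl
      rw [h1, lintegral_indicator_one (hG.measurableSet.prod MeasurableSet.univ),
        Measure.restrict_apply (hG.measurableSet.prod MeasurableSet.univ)]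
      congr 1
      rw [prod_inter_prod, inter_univ, univ_inter]
    have hmono : Monotone fun m (p : U × ℝ) => ENNReal.ofReal (g m p.1) := by
      intro a b hab
      intro p
      apply ENNReal.ofReal_le_ofReal
      refine min_le_min le_rfl (mul_le_mul_of_nonneg_right ?_ Metric.infDist_nonneg)
      have : (a : ℝ) ≤ b := Nat.cast_le.mpr hab
      linarith
    have hMC : ∀ ρ : Measure (U × ℝ), (⨆ m, L ρ m) = ρ (G ×ˢ E) := by
      intro ρ
      rw [hL]
      rw [← lintegral_iSup (fun m => hmg m) hmono]
      have heq : ∀ p : U × ℝ, (⨆ m, ENNReal.ofReal (g m p.1))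
          = (G ×ˢ (univ : Set ℝ)).indicator (fun _ => (1 : ℝ≥0∞)) p := by
        intro p
        rw [hsup p.1]
        by_cases hp : p.1 ∈ G
        · rw [indicator_of_mem (by simp [hp] : ((p.1, (0:ℝ)) : U × ℝ) ∈ G ×ˢ (univ : Set ℝ)),
            indicator_of_mem (by simp [hp] : p ∈ G ×ˢ (univ : Set ℝ))]
        · rw [indicator_of_notMem (by simp [hp]), indicator_of_notMem (by simp [hp])]
      simp_rw [heq]
      exact hindic ρ
    have hLle : ∀ (ρ : Measure (U × ℝ)) (m : ℕ), L ρ m ≤ ρ (G ×ˢ E) := by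
      intro ρ m
      rw [← hindic ρ]
      apply lintegral_mono
      intro p
      by_cases hp : p.1 ∈ G
      · rw [indicator_of_mem (by simp [hp] : p ∈ G ×ˢ (univ : Set ℝ))]
        exact ENNReal.ofReal_le_one.mpr (hg1 m p.1)
      · have hz : ENNReal.ofReal (g m p.1) = 0 := by
          have h0 : g m p.1 = 0 := by
            simp [hgdef, Metric.infDist_zero_of_mem (show p.1 ∈ Gᶜ by simpa using hp)]
          rw [h0, ENNReal.ofReal_zero]
        exact le_of_eq_of_le hz (zero_le ..)
    have hIL : ∀ (ρ : Measure (U × ℝ)) (m : ℕ),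
        ∫ p in univ ×ˢ E, (fm m) p.1 ∂ρ = (L ρ m).toReal := by
      intro ρ m
      have hcoe : ⇑(fm m) = g m := rfl
      simp only [hcoe]
      rw [integral_eq_lintegral_of_nonneg_ae (Eventually.of_forall fun p : U × ℝ => hg0 m p.1)
        (((hgcont m).comp continuous_fst).aestronglyMeasurable)]
    rw [← hMC ν]
    refine iSup_le fun m => ?_
    have htends := hst E hE hE' (fm m)
    have hofReal : Tendsto (fun n => ENNReal.ofReal (∫ p in univ ×ˢ E, (fm m) p.1 ∂(νs n))) atTop
        (𝓝 (ENNReal.ofReal (∫ p in univ ×ˢ E, (fm m) p.1 ∂ν))) :=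
      (ENNReal.continuous_ofReal.tendsto _).comp htends
    have hLν : ENNReal.ofReal (∫ p in univ ×ˢ E, (fm m) p.1 ∂ν) = L ν m := by
      rw [hIL ν m, ENNReal.ofReal_toReal]
      exact ((hLle ν m).trans_lt (measure_lt_top ν _)).ne
    have hliminf_eq : liminf (fun n => ENNReal.ofReal (∫ p in univ ×ˢ E, (fm m) p.1 ∂(νs n)))
        atTop = L ν m := by
      rw [← hLν]
      exact hofReal.liminf_eq
    rw [← hliminf_eq]
    refine liminf_le_liminf (Eventually.of_forall fun n => ?_)
    rw [hIL (νs n) m]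
    exact (ENNReal.ofReal_toReal_le).trans (hLle (νs n) m)

end L2
lemma le_liminf_add_ennreal (u v : ℕ → ℝ≥0∞) :
    liminf u atTop + liminf v atTop ≤ liminf (fun n => u n + v n) atTop := by
  by_cases hu : liminf u atTop = 0
  · rw [hu, zero_add]
    refine liminf_le_liminf (Eventually.of_forall fun n => ?_)
    exact le_add_self
  by_cases hv : liminf v atTop = 0
  · rw [hv, add_zero]
    refine liminf_le_liminf (Eventually.of_forall fun n => ?_)
    exact self_le_add_right _ _
  have key : ∀ a ∈ Iio (liminf u atTop), ∀ b ∈ Iio (liminf v atTop),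
      a + b ≤ liminf (fun n => u n + v n) atTop := by
    intro a ha b hb
    have hau : ∀ᶠ n in atTop, a < u n := eventually_lt_of_lt_liminf ha
    have hbv : ∀ᶠ n in atTop, b < v n := eventually_lt_of_lt_liminf hb
    refine le_liminf_of_le (by isBoundedDefault) ?_
    filter_upwards [hau, hbv] with n h1 h2
    exact add_le_add h1.le h2.le
  have hx : liminf u atTop = ⨆ a ∈ Iio (liminf u atTop), a := by
    rw [← sSup_eq_iSup]
    exact (isLUB_Iio.sSup_eq).symm
  have hy' : liminf v atTop = ⨆ b ∈ Iio (liminf v atTop), b := by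
    rw [← sSup_eq_iSup]
    exact (isLUB_Iio.sSup_eq).symm
  have hfin := ENNReal.biSup_add_biSup_le (s := Iio (liminf u atTop))
    (t := Iio (liminf v atTop)) (f := fun a => a) (g := fun b => b)
    ⟨0, pos_iff_ne_zero.mpr hu⟩ ⟨0, pos_iff_ne_zero.mpr hv⟩ key
  rwa [← hx, ← hy'] at hfin

lemma sum_liminf_le_ennreal {ι : Type*} (s : Finset ι) (F : ι → ℕ → ℝ≥0∞) :
    ∑ i ∈ s, liminf (F i) atTop ≤ liminf (fun n => ∑ i ∈ s, F i n) atTop := by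
  classical
  induction s using Finset.induction with
  | empty => simp only [Finset.sum_empty]; exact zero_le ..
  | @insert x s hx ih =>
    rw [Finset.sum_insert hx]
    refine le_trans (add_le_add_right ih _) ?_
    refine (le_liminf_add_ennreal _ _).trans (le_of_eq ?_)
    congr 1
    funext n
    rw [Finset.sum_insert hx]

section L3

variable {U : Type*} [MetricSpace U] [SecondCountableTopology U]
  [MeasurableSpace U] [BorelSpace U]

lemma stable_open_sections
    (hU : ∃ (S : Type) (ts : TopologicalSpace S), @PolishSpace S ts ∧
      ∃ φ : S → U, @Continuous S U ts _ φ ∧ Function.Surjective φ)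
    {T : ℝ} {νs : ℕ → Measure (U × ℝ)} {ν : Measure (U × ℝ)}
    (hyn : ∀ n, IsYoungMeasure T (νs n)) (hy : IsYoungMeasure T ν)
    (hst : StablyTendsTo T νs ν) {A : Set (U × ℝ)} (hA : MeasurableSet A)
    (hAsub : A ⊆ Set.univ ×ˢ Set.Icc 0 T) (hAsec : ∀ t : ℝ, IsOpen {u : U | (u, t) ∈ A}) :
    ν A ≤ liminf (fun n => νs n A) atTop := by
  classical
  haveI : IsFiniteMeasure ν := isYoungMeasure_isFiniteMeasure hy
  obtain ⟨S, tS, hpS, φ, hφc, hφs⟩ := hU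
  letI := tS
  letI : MeasurableSpace S := borel S
  haveI : BorelSpace S := ⟨rfl⟩
  haveI := hpS
  -- countable basis, enumerated
  obtain ⟨Bas, hBasc, -, hBasis⟩ := TopologicalSpace.exists_countable_basis U
  obtain ⟨G, hG⟩ := (hBasc.insert ∅).exists_eq_range (insert_nonempty _ _)
  have hGopen : ∀ i, IsOpen (G i) := by
    intro i
    have hGi : G i ∈ insert ∅ Bas := by rw [hG]; exact mem_range_self i
    rcases mem_insert_iff.mp hGi with h | h
    · rw [h]; exact isOpen_empty
    · exact hBasis.isOpen h
  set D : ℕ → Set ℝ := fun i => {t | ∀ u ∈ G i, (u, t) ∈ A} with hD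
  have hGD : ∀ i, (G i) ×ˢ (D i) ⊆ A := by
    rintro i ⟨u, t⟩ ⟨hu, ht⟩
    exact ht u hu
  have hAcov : ∀ p : U × ℝ, p ∈ A → ∃ i, p.1 ∈ G i ∧ p.2 ∈ D i := by
    rintro ⟨u, t⟩ hp
    have hu : u ∈ {v : U | (v, t) ∈ A} := hp
    obtain ⟨v, hvB, huv, hvsub⟩ := hBasis.exists_subset_of_mem_open hu (hAsec t)
    have : v ∈ range G := by rw [← hG]; exact mem_insert_of_mem _ hvB
    obtain ⟨i, rfl⟩ := this
    exact ⟨i, huv, fun w hw => hvsub hw⟩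
  -- null measurability of the D i
  set μT : Measure ℝ := volume.restrict (Icc 0 T) with hμT
  haveI : IsFiniteMeasure μT := by
    constructor
    rw [hμT, Measure.restrict_apply_univ]
    exact measure_Icc_lt_top
  have hDnm : ∀ i, NullMeasurableSet (D i) μT := by
    intro i
    have hcompl : (D i)ᶜ = Prod.snd '' ((G i ×ˢ (univ : Set ℝ)) ∩ Aᶜ) := by
      ext t
      simp only [mem_compl_iff, hD, mem_setOf_eq, not_forall, mem_image, mem_inter_iff,
        mem_prod, mem_univ, and_true]
      constructor
      · rintro ⟨u, hu, hua⟩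
        exact ⟨(u, t), ⟨hu, hua⟩, rfl⟩
      · rintro ⟨⟨u, t'⟩, ⟨⟨hu, hua⟩, rfl⟩⟩
        exact ⟨u, hu, hua⟩
    have hmeasB : MeasurableSet ((G i ×ˢ (univ : Set ℝ)) ∩ Aᶜ) :=
      ((hGopen i).measurableSet.prod MeasurableSet.univ).inter hA.compl
    have han : MeasureTheory.AnalyticSet ((G i ×ˢ (univ : Set ℝ)) ∩ Aᶜ) := by
      set Φ : S × ℝ → U × ℝ := Prod.map φ id with hΦ
      have hΦc : Continuous Φ := hφc.prodMap continuous_id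
      have hΦs : Function.Surjective Φ := hφs.prodMap Function.surjective_id
      have hpre : MeasurableSet (Φ ⁻¹' ((G i ×ˢ (univ : Set ℝ)) ∩ Aᶜ)) :=
        hΦc.measurable hmeasB
      have h1 := hpre.analyticSet
      have h2 := h1.image_of_continuous hΦc
      rwa [Set.image_preimage_eq _ hΦs] at h2
    have han2 : MeasureTheory.AnalyticSet ((D i)ᶜ) := by
      rw [hcompl]
      exact han.image_of_continuous continuous_snd
    have h3 := (AnalyticSet.nullMeasurableSet' μT han2).compl
    rwa [compl_compl] at h3
  have hEex : ∀ i, ∃ Ei : Set ℝ, Ei ⊆ D i ∧ MeasurableSet Ei ∧ μT (D i \ Ei) = 0 := by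
    intro i
    obtain ⟨Ei, hE1, hE2, hE3⟩ := (hDnm i).exists_measurable_subset_ae_eq
    exact ⟨Ei, hE1, hE2, (ae_eq_set.mp hE3).2⟩
  choose E hED hEmeas hNull using hEex
  set E' : ℕ → Set ℝ := fun i => E i ∩ Icc 0 T with hE'
  have hE'meas : ∀ i, MeasurableSet (E' i) := fun i => (hEmeas i).inter measurableSet_Icc
  have hE'sub : ∀ i, E' i ⊆ Icc 0 T := fun i => inter_subset_right
  have hrectsub : ∀ i, (G i) ×ˢ (E' i) ⊆ A := fun i =>
    (prod_mono Subset.rfl (inter_subset_left.trans (hED i))).trans (hGD i)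
  set W : Set (U × ℝ) := ⋃ i, (G i) ×ˢ (E' i) with hW
  have hNi : ∀ i, ν (univ ×ˢ (toMeasurable μT (D i \ E i))) = 0 := by
    intro i
    rw [hy _ (measurableSet_toMeasurable _ _)]
    have h1 : volume (toMeasurable μT (D i \ E i) ∩ Icc 0 T)
        = μT (toMeasurable μT (D i \ E i)) := by
      rw [hμT, Measure.restrict_apply (measurableSet_toMeasurable _ _)]
    rw [h1, measure_toMeasurable, hNull i]
  have hAW : ν (A \ W) = 0 := by
    have hsub : A \ W ⊆ ⋃ i, univ ×ˢ (toMeasurable μT (D i \ E i)) := by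
      rintro ⟨u, t⟩ ⟨hpA, hpW⟩
      obtain ⟨i, hiu, hit⟩ := hAcov _ hpA
      have htIcc : t ∈ Icc 0 T := (hAsub hpA).2
      by_cases hEt : t ∈ E i
      · refine absurd ?_ hpW
        exact mem_iUnion.mpr ⟨i, mk_mem_prod hiu ⟨hEt, htIcc⟩⟩
      · exact mem_iUnion.mpr ⟨i, mk_mem_prod (mem_univ _)
          (subset_toMeasurable _ _ ⟨hit, hEt⟩)⟩
    exact measure_mono_null hsub (measure_iUnion_null hNi)
  have hνAW : ν A ≤ ν W := by
    calc ν A ≤ ν (A ∩ W) + ν (A \ W) := measure_le_inter_add_diff _ _ _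
    _ = ν (A ∩ W) := by rw [hAW, add_zero]
    _ ≤ ν W := measure_mono inter_subset_right
  set R : ℕ → Set (U × ℝ) := fun N => ⋃ i ∈ Finset.range N, (G i) ×ˢ (E' i) with hR
  have hRmono : Monotone R := by
    intro a b hab
    exact biUnion_subset_biUnion_left (Finset.range_subset_range.mpr hab)
  have hWR : ν W = ⨆ N, ν (R N) := by
    have hWeq : W = ⋃ N, R N := by
      ext p
      simp only [hW, hR, mem_iUnion, Finset.mem_range]
      constructor
      · rintro ⟨i, hi⟩
        exact ⟨i + 1, i, Nat.lt_succ_self i, hi⟩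
      · rintro ⟨N, i, -, hi⟩
        exact ⟨i, hi⟩
    rw [hWeq, hRmono.directed_le.measure_iUnion]
  have hRA : ∀ N, R N ⊆ A := fun N =>
    iUnion₂_subset fun i _ => hrectsub i
  -- finite unions via disjointification
  have hRN : ∀ N, ν (R N) ≤ liminf (fun n => νs n (R N)) atTop := by
    intro N
    set atom : Finset (Fin N) → Set ℝ := fun s =>
      (⋂ i ∈ s, E' i.val) ∩ (⋂ i ∈ sᶜ, (E' i.val)ᶜ) with hatom
    set gs : Finset (Fin N) → Set U := fun s => ⋃ i ∈ s, G i.val with hgs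
    have hatom_meas : ∀ s, MeasurableSet (atom s) := by
      intro s
      refine MeasurableSet.inter ?_ ?_
      · exact MeasurableSet.biInter s.countable_toSet fun i _ => hE'meas i.val
      · exact MeasurableSet.biInter sᶜ.countable_toSet fun i _ => (hE'meas i.val).compl
    have hgs_open : ∀ s, IsOpen (gs s) := fun s => isOpen_biUnion fun i _ => hGopen i.val
    have hatom_disj : ∀ s s', s ≠ s' → Disjoint (atom s) (atom s') := by
      intro s s' hss
      rw [Set.disjoint_left]
      intro t hts hts'
      by_cases hsub : s ⊆ s'
      · have hss2 : s ⊂ s' := Finset.ssubset_iff_subset_ne.mpr ⟨hsub, hss⟩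
        obtain ⟨i, h1, h2⟩ := Finset.exists_of_ssubset hss2
        have ha : t ∈ E' i.val := mem_iInter₂.mp hts'.1 i h1
        have hb : t ∈ (E' i.val)ᶜ := mem_iInter₂.mp hts.2 i (Finset.mem_compl.mpr h2)
        exact hb ha
      · obtain ⟨i, h1, h2⟩ := Finset.not_subset.mp hsub
        have ha : t ∈ E' i.val := mem_iInter₂.mp hts.1 i h1
        have hb : t ∈ (E' i.val)ᶜ := mem_iInter₂.mp hts'.2 i (Finset.mem_compl.mpr h2)
        exact hb ha
    have hdecomp : R N = ⋃ s : Finset (Fin N), (gs s) ×ˢ (atom s) := by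
      ext ⟨u, t⟩
      simp only [hR, mem_iUnion, Finset.mem_range, mem_prod]
      constructor
      · rintro ⟨i, hiN, hu, ht⟩
        refine ⟨Finset.univ.filter (fun j : Fin N => t ∈ E' j.val), ?_, ?_, ?_⟩
        · simp only [hgs, mem_iUnion]
          exact ⟨⟨i, hiN⟩, Finset.mem_filter.mpr ⟨Finset.mem_univ _, ht⟩, hu⟩
        · exact mem_iInter₂.mpr fun j hj => (Finset.mem_filter.mp hj).2
        · refine mem_iInter₂.mpr fun j hj => ?_
          have hj' := Finset.mem_compl.mp hj
          intro hcon
          exact hj' (Finset.mem_filter.mpr ⟨Finset.mem_univ _, hcon⟩)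
      · rintro ⟨s, hu, ht1, ht2⟩
        simp only [hgs, mem_iUnion] at hu
        obtain ⟨i, his, hu⟩ := hu
        exact ⟨i.val, i.isLt, hu, mem_iInter₂.mp ht1 i his⟩
    have hmeasR : ∀ ρ : Measure (U × ℝ),
        ρ (R N) = ∑ s : Finset (Fin N), ρ ((gs s) ×ˢ (atom s)) := by
      intro ρ
      have hdisj : Pairwise (Function.onFun Disjoint fun s : Finset (Fin N) => (gs s) ×ˢ (atom s)) := by
        intro s s' hss
        rw [Function.onFun, Set.disjoint_left]
        rintro ⟨u, t⟩ hp hp'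
        exact (Set.disjoint_left.mp (hatom_disj s s' hss) hp.2) hp'.2
      have hms : ∀ s : Finset (Fin N), MeasurableSet ((gs s) ×ˢ (atom s)) := fun s =>
        (hgs_open s).measurableSet.prod (hatom_meas s)
      rw [hdecomp, measure_iUnion hdisj hms, tsum_fintype]
    have hterm : ∀ s : Finset (Fin N), ν ((gs s) ×ˢ (atom s))
        ≤ liminf (fun n => νs n ((gs s) ×ˢ (atom s))) atTop := by
      intro s
      rcases s.eq_empty_or_nonempty with rfl | hne
      · have hgse : gs (∅ : Finset (Fin N)) = ∅ := by simp [hgs]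
        rw [hgse]
        simp only [empty_prod, measure_empty]
        exact zero_le ..
      · obtain ⟨i, hi⟩ := hne
        have hsubIcc : atom s ⊆ Icc 0 T := fun t ht =>
          hE'sub i.val (mem_iInter₂.mp ht.1 i hi)
        exact stable_rect hyn hy hst (hgs_open s) (hatom_meas s) hsubIcc
    rw [hmeasR ν]
    calc ∑ s : Finset (Fin N), ν ((gs s) ×ˢ (atom s))
        ≤ ∑ s : Finset (Fin N), liminf (fun n => νs n ((gs s) ×ˢ (atom s))) atTop :=
          Finset.sum_le_sum fun s _ => hterm s
      _ ≤ liminf (fun n => ∑ s : Finset (Fin N), νs n ((gs s) ×ˢ (atom s))) atTop :=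
          sum_liminf_le_ennreal _ _
      _ = liminf (fun n => νs n (R N)) atTop := by
          congr 1
          funext n
          rw [hmeasR (νs n)]
  calc ν A ≤ ν W := hνAW
  _ = ⨆ N, ν (R N) := hWR
  _ ≤ liminf (fun n => νs n A) atTop := by
      refine iSup_le fun N => (hRN N).trans ?_
      exact liminf_le_liminf (Eventually.of_forall fun n => measure_mono (hRA N))

end L3


section L4

variable {U : Type*} [MetricSpace U] [SecondCountableTopology U]
  [MeasurableSpace U] [BorelSpace U]

lemma young_lintegral_le_liminf
    (hU : IsSuslin U)
    {T : ℝ} {νs : ℕ → Measure (U × ℝ)} {ν : Measure (U × ℝ)}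
    (hyn : ∀ n, IsYoungMeasure T (νs n)) (hy : IsYoungMeasure T ν)
    (hst : StablyTendsTo T νs ν) {g : U × ℝ → ℝ≥0∞} (hg : Measurable g)
    (hlsc : ∀ t : ℝ, LowerSemicontinuous fun u : U => g (u, t)) :
    ∫⁻ p in Set.univ ×ˢ Set.Icc 0 T, g p ∂ν
      ≤ liminf (fun n => ∫⁻ p in Set.univ ×ˢ Set.Icc 0 T, g p ∂(νs n)) atTop := by
  set Sc : Set (U × ℝ) := Set.univ ×ˢ Set.Icc 0 T with hSc
  have hScm : MeasurableSet Sc := MeasurableSet.univ.prod measurableSet_Icc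
  have htrunc : ∀ x : ℝ≥0∞, (⨆ c : ℕ, min x c) = x := by
    intro x
    apply le_antisymm (iSup_le fun c => min_le_left _ _)
    rcases eq_or_ne x ⊤ with rfl | hx
    · have h1 : ∀ c : ℕ, min (⊤ : ℝ≥0∞) (c : ℝ≥0∞) = (c : ℝ≥0∞) := fun c =>
        min_eq_right le_top
      simp only [h1]
      rw [ENNReal.iSup_natCast]
    · obtain ⟨c, hc⟩ := ENNReal.exists_nat_gt hx
      refine le_iSup_of_le c ?_
      rw [min_eq_left hc.le]
  have hcore : ∀ c : ℕ, ∫⁻ p in Sc, min (g p) c ∂ν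
      ≤ liminf (fun n => ∫⁻ p in Sc, min (g p) c ∂(νs n)) atTop := by
    intro c
    set h : U × ℝ → ℝ := fun p => (min (g p) c).toReal with hh
    have hmeas_h : Measurable h := (hg.min measurable_const).ennreal_toReal
    have hofReal : ∀ p, ENNReal.ofReal (h p) = min (g p) c := fun p =>
      ENNReal.ofReal_toReal (ne_top_of_le_ne_top (ENNReal.natCast_ne_top c) (min_le_right _ _))
    set Aset : ℝ → Set (U × ℝ) := fun s => {p | ENNReal.ofReal s < min (g p) c} with hAset
    have hAmeas : ∀ s, MeasurableSet (Aset s) := fun s =>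
      (hg.min measurable_const) measurableSet_Ioi
    have hsets : ∀ s ∈ Ioi (0:ℝ), {p : U × ℝ | s < h p} = Aset s := by
      intro s hs
      ext p
      simp only [mem_setOf_eq, hAset, hh]
      rw [ENNReal.ofReal_lt_iff_lt_toReal (le_of_lt hs)
        (ne_top_of_le_ne_top (ENNReal.natCast_ne_top c) (min_le_right _ _))]
    have hlayer : ∀ ρ : Measure (U × ℝ), ∫⁻ p in Sc, min (g p) c ∂ρ
        = ∫⁻ s in Ioi (0:ℝ), ρ (Aset s ∩ Sc) := by
      intro ρ
      have h1 := lintegral_eq_lintegral_meas_lt (ρ.restrict Sc)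
        (Eventually.of_forall fun p => ENNReal.toReal_nonneg) hmeas_h.aemeasurable
      calc ∫⁻ p in Sc, min (g p) c ∂ρ = ∫⁻ p in Sc, ENNReal.ofReal (h p) ∂ρ :=
            lintegral_congr fun p => (hofReal p).symm
        _ = ∫⁻ s in Ioi (0:ℝ), (ρ.restrict Sc) {p | s < h p} := h1
        _ = ∫⁻ s in Ioi (0:ℝ), ρ (Aset s ∩ Sc) := by
            refine setLIntegral_congr_fun measurableSet_Ioi
              (fun s hs => ?_)
            rw [hsets s hs, Measure.restrict_apply (hAmeas s)]
    have hkey : ∀ s : ℝ, ν (Aset s ∩ Sc) ≤ liminf (fun n => νs n (Aset s ∩ Sc)) atTop := by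
      intro s
      refine stable_open_sections hU hyn hy hst ((hAmeas s).inter hScm) inter_subset_right ?_
      intro t
      by_cases ht : t ∈ Icc (0:ℝ) T
      · have hsec : {u : U | (u, t) ∈ Aset s ∩ Sc}
            = {u : U | ENNReal.ofReal s < min (g (u, t)) (c : ℝ≥0∞)} := by
          ext u
          simp only [mem_setOf_eq, mem_inter_iff, hAset, hSc, mem_prod, mem_univ, true_and]
          exact ⟨fun h => h.1, fun h => ⟨h, ht⟩⟩
        rw [hsec]
        by_cases hc : ENNReal.ofReal s < (c : ℝ≥0∞)
        · have : {u : U | ENNReal.ofReal s < min (g (u, t)) (c : ℝ≥0∞)}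
              = {u : U | ENNReal.ofReal s < g (u, t)} := by
            ext u
            simp [lt_min_iff, hc]
          rw [this]
          exact lowerSemicontinuous_iff_isOpen_preimage.mp (hlsc t) _
        · have : {u : U | ENNReal.ofReal s < min (g (u, t)) (c : ℝ≥0∞)} = ∅ := by
            ext u
            simp only [mem_setOf_eq, mem_empty_iff_false, iff_false, lt_min_iff, not_and]
            exact fun _ => hc
          rw [this]
          exact isOpen_empty
      · have hsec : {u : U | (u, t) ∈ Aset s ∩ Sc} = ∅ := by
          ext u
          simp only [mem_setOf_eq, mem_inter_iff, hSc, mem_prod, mem_univ, true_and,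
            mem_empty_iff_false, iff_false, not_and]
          exact fun _ => ht
        rw [hsec]
        exact isOpen_empty
    have hmono_meas : ∀ n, Measurable fun s : ℝ => νs n (Aset s ∩ Sc) := by
      intro n
      have hanti : Antitone fun s : ℝ => νs n (Aset s ∩ Sc) := by
        intro s1 s2 h12
        refine measure_mono (inter_subset_inter_left _ ?_)
        intro p hp
        exact lt_of_le_of_lt (ENNReal.ofReal_le_ofReal h12) hp
      exact hanti.measurable
    calc ∫⁻ p in Sc, min (g p) c ∂ν = ∫⁻ s in Ioi (0:ℝ), ν (Aset s ∩ Sc) := hlayer ν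
      _ ≤ ∫⁻ s in Ioi (0:ℝ), liminf (fun n => νs n (Aset s ∩ Sc)) atTop :=
          lintegral_mono fun s => hkey s
      _ ≤ liminf (fun n => ∫⁻ s in Ioi (0:ℝ), νs n (Aset s ∩ Sc)) atTop :=
          lintegral_liminf_le hmono_meas
      _ = liminf (fun n => ∫⁻ p in Sc, min (g p) c ∂(νs n)) atTop := by
          congr 1
          funext n
          rw [hlayer (νs n)]
  have hmono2 : Monotone fun (c : ℕ) (p : U × ℝ) => min (g p) (c : ℝ≥0∞) := by
    intro a b hab p
    exact min_le_min le_rfl (Nat.cast_le.mpr hab)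
  calc ∫⁻ p in Sc, g p ∂ν = ∫⁻ p in Sc, ⨆ c : ℕ, min (g p) c ∂ν :=
        lintegral_congr fun p => (htrunc (g p)).symm
    _ = ⨆ c : ℕ, ∫⁻ p in Sc, min (g p) c ∂ν :=
        lintegral_iSup (fun c => hg.min measurable_const) hmono2
    _ ≤ liminf (fun n => ∫⁻ p in Sc, g p ∂(νs n)) atTop := by
        refine iSup_le fun c => (hcore c).trans ?_
        refine liminf_le_liminf (Eventually.of_forall fun n => ?_)
        exact lintegral_mono fun p => min_le_left _ _

end L4

/-- For random Young measures converging stably almost surely, expectations of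
integrals of a nonnegative integrand, measurable and lower semicontinuous in `u`, are lower
semicontinuous along the sequence; in particular uniform bounds pass to the limit. -/
theorem random_young_measure_expectation_lsc
    (T : ℝ) (hT : 0 < T)
    (Ω : Type*) [MeasurableSpace Ω] (P : Measure Ω) [IsProbabilityMeasure P]
    (U : Type*) [TopologicalSpace U] [TopologicalSpace.MetrizableSpace U]
    [MeasurableSpace U] [BorelSpace U] (hU : IsSuslin U)
    (ϑ : ℝ → U → ℝ≥0∞)
    (hϑmeas : Measurable fun p : U × ℝ => ϑ p.2 p.1)
    (hϑlsc : ∀ t : ℝ, LowerSemicontinuous (ϑ t))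
    (μs : ℕ → Ω → Measure (U × ℝ)) (μ : Ω → Measure (U × ℝ))
    (hyoung_n : ∀ n ω, IsYoungMeasure T (μs n ω))
    (hyoung : ∀ ω, IsYoungMeasure T (μ ω))
    (hmeas_n : ∀ n, ∀ J : Set (U × ℝ), MeasurableSet J → Measurable fun ω => μs n ω J)
    (hmeas : ∀ J : Set (U × ℝ), MeasurableSet J → Measurable fun ω => μ ω J)
    (hconv : ∀ᵐ ω ∂P, StablyTendsTo T (fun n => μs n ω) (μ ω)) :
    (∫⁻ ω, (∫⁻ p in Set.univ ×ˢ Set.Icc (0:ℝ) T, ϑ p.2 p.1 ∂(μ ω)) ∂P) ≤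
      Filter.liminf
        (fun n => ∫⁻ ω, (∫⁻ p in Set.univ ×ˢ Set.Icc (0:ℝ) T, ϑ p.2 p.1 ∂(μs n ω)) ∂P)
        Filter.atTop ∧
    ∀ R : ℝ≥0∞,
      (∀ n, (∫⁻ ω, (∫⁻ p in Set.univ ×ˢ Set.Icc (0:ℝ) T, ϑ p.2 p.1 ∂(μs n ω)) ∂P) ≤ R) →
      (∫⁻ ω, (∫⁻ p in Set.univ ×ˢ Set.Icc (0:ℝ) T, ϑ p.2 p.1 ∂(μ ω)) ∂P) ≤ R := by
  letI : MetricSpace U := TopologicalSpace.metrizableSpaceMetric U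
  haveI hsep : TopologicalSpace.SeparableSpace U := by
    obtain ⟨S, tS, hpS, φ, hφc, hφs⟩ := hU
    letI := tS
    haveI := hpS
    exact (hφs.denseRange).separableSpace hφc
  haveI : SecondCountableTopology U := UniformSpace.secondCountable_of_separable U
  have hS : MeasurableSet (Set.univ ×ˢ Set.Icc (0:ℝ) T : Set (U × ℝ)) :=
    MeasurableSet.univ.prod measurableSet_Icc
  have hκ : ∀ n, Measurable fun ω =>
      ∫⁻ p in Set.univ ×ˢ Set.Icc (0:ℝ) T, ϑ p.2 p.1 ∂(μs n ω) := by
    intro n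
    have h1 : Measurable (μs n) :=
      Measure.measurable_of_measurable_coe _ (fun s hs => hmeas_n n s hs)
    have h2 : Measurable fun ρ : Measure (U × ℝ) =>
        ∫⁻ p, (Set.univ ×ˢ Set.Icc (0:ℝ) T).indicator (fun p : U × ℝ => ϑ p.2 p.1) p ∂ρ :=
      Measure.measurable_lintegral (hϑmeas.indicator hS)
    have h3 := h2.comp h1
    simpa only [lintegral_indicator hS, Function.comp_def] using h3
  have hae : ∀ᵐ ω ∂P, (∫⁻ p in Set.univ ×ˢ Set.Icc (0:ℝ) T, ϑ p.2 p.1 ∂(μ ω))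
      ≤ liminf (fun n => ∫⁻ p in Set.univ ×ˢ Set.Icc (0:ℝ) T, ϑ p.2 p.1 ∂(μs n ω)) atTop := by
    filter_upwards [hconv] with ω hω
    exact young_lintegral_le_liminf hU (fun n => hyoung_n n ω) (hyoung ω) hω hϑmeas
      (fun t => hϑlsc t)
  have hfirst : (∫⁻ ω, (∫⁻ p in Set.univ ×ˢ Set.Icc (0:ℝ) T, ϑ p.2 p.1 ∂(μ ω)) ∂P) ≤
      Filter.liminf
        (fun n => ∫⁻ ω, (∫⁻ p in Set.univ ×ˢ Set.Icc (0:ℝ) T, ϑ p.2 p.1 ∂(μs n ω)) ∂P)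
        Filter.atTop := by
    calc (∫⁻ ω, (∫⁻ p in Set.univ ×ˢ Set.Icc (0:ℝ) T, ϑ p.2 p.1 ∂(μ ω)) ∂P)
        ≤ ∫⁻ ω, liminf
            (fun n => ∫⁻ p in Set.univ ×ˢ Set.Icc (0:ℝ) T, ϑ p.2 p.1 ∂(μs n ω)) atTop ∂P :=
          lintegral_mono_ae hae
      _ ≤ _ := lintegral_liminf_le hκ
  refine ⟨hfirst, fun R hR => hfirst.trans ?_⟩
  refine le_trans (liminf_le_liminf (Eventually.of_forall hR)) ?_
  exact le_of_eq (liminf_const R)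
end
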